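/- arXiv:2512.07529 — 5 statements merged into one kernel-verified Lean document; each statement's English description precedes it below -/
import Mathlib

section
/- Let Λ : ℝⁿ → Matrix (Fin n) (Fin n) ℝ be a smooth map with Λ(x) antisymmetric for every x, and let X : ℝⁿ → ℝⁿ be smooth. Assume the associated Jacobi bracket satisfies the Jacobi identity {f,{g,h}} + {g,{h,f}} + {h,{f,g}} = 0 for all smooth f, g, h : ℝⁿ → ℝ. For a smooth function f define its Hamiltonian vector field X_f : ℝⁿ → ℝⁿ componentwise by (X_f)ⱼ(x) = Σᵢ Λ(x)_{ij} ∂ᵢf(x) + f(x) X(x)ⱼ. Then the map f ↦ X_f is a Lie algebra morphism: for all smooth f, g, the Lie bracket of vector fields satisfies [X_f, X_g] = X_{{f,g}}, where [V,W](x) = DW(x)(V(x)) − DV(x)(W(x)). -/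
open scoped Matrix

/-- The partial derivative in the `i`-th coordinate of `f : ℝⁿ → ℝ`. -/
noncomputable def pd {n : ℕ} (f : (Fin n → ℝ) → ℝ) (i : Fin n) (x : Fin n → ℝ) : ℝ :=
  fderiv ℝ f x (Pi.single i 1)

/-- The Jacobi bracket associated with a bivector field `Λ` (given as a field of
antisymmetric matrices) and a vector field `X` on `ℝⁿ`. -/
noncomputable def jacobiBracket (n : ℕ) (Λ : (Fin n → ℝ) → Matrix (Fin n) (Fin n) ℝ)
    (X : (Fin n → ℝ) → Fin n → ℝ) (f g : (Fin n → ℝ) → ℝ) : (Fin n → ℝ) → ℝ :=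
  fun x =>
    (∑ i : Fin n, ∑ j : Fin n, Λ x i j * pd f i x * pd g j x)
    + f x * (∑ j : Fin n, X x j * pd g j x)
    - g x * (∑ j : Fin n, X x j * pd f j x)

/-- The Hamiltonian vector field of a smooth function `f`, with components
`(X_f)ⱼ(x) = Σᵢ Λ(x)_{ij} ∂ᵢf(x) + f(x) X(x)ⱼ`. -/
noncomputable def hamField (n : ℕ) (Λ : (Fin n → ℝ) → Matrix (Fin n) (Fin n) ℝ)
    (X : (Fin n → ℝ) → Fin n → ℝ) (f : (Fin n → ℝ) → ℝ) : (Fin n → ℝ) → Fin n → ℝ :=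
  fun x j => (∑ i : Fin n, Λ x i j * pd f i x) + f x * X x j

/-- The Lie bracket of vector fields on `ℝⁿ`: `[V,W](x) = DW(x)(V(x)) − DV(x)(W(x))`. -/
noncomputable def vfBracket (n : ℕ) (V W : (Fin n → ℝ) → Fin n → ℝ) :
    (Fin n → ℝ) → Fin n → ℝ :=
  fun x => fderiv ℝ W x (V x) - fderiv ℝ V x (W x)

variable {n : ℕ}

lemma pd_const (c : ℝ) (i : Fin n) (x) : pd (fun _ => c) i x = 0 := by
  simp [pd]

lemma pd_add {u v : (Fin n → ℝ) → ℝ} {x} (hu : DifferentiableAt ℝ u x)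
    (hv : DifferentiableAt ℝ v x) (i : Fin n) :
    pd (fun y => u y + v y) i x = pd u i x + pd v i x := by
  simp [pd, fderiv_fun_add hu hv]

lemma pd_neg (u : (Fin n → ℝ) → ℝ) (i : Fin n) (x) :
    pd (fun y => -u y) i x = - pd u i x := by
  simp [pd, fderiv_neg]

lemma pd_mul {u v : (Fin n → ℝ) → ℝ} {x} (hu : DifferentiableAt ℝ u x)
    (hv : DifferentiableAt ℝ v x) (i : Fin n) :
    pd (fun y => u y * v y) i x = u x * pd v i x + v x * pd u i x := by
  simp [pd, fderiv_fun_mul hu hv]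

lemma pd_proj (j i : Fin n) (x) : pd (fun y => y j) i x = if i = j then 1 else 0 := by
  have : (fun y : Fin n → ℝ => y j) = (ContinuousLinearMap.proj j : (Fin n → ℝ) →L[ℝ] ℝ) := rfl
  rw [pd, this, ContinuousLinearMap.fderiv]
  simp [Pi.single_apply, eq_comm]

lemma pd_contDiff {f : (Fin n → ℝ) → ℝ} (hf : ContDiff ℝ (⊤ : ℕ∞) f) (i : Fin n) :
    ContDiff ℝ (⊤ : ℕ∞) (fun x => pd f i x) := by
  exact (hf.fderiv_right (by simp)).clm_apply contDiff_const

section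
variable (Λ : (Fin n → ℝ) → Matrix (Fin n) (Fin n) ℝ) (X : (Fin n → ℝ) → Fin n → ℝ)

noncomputable def Afun (f g : (Fin n → ℝ) → ℝ) (x : Fin n → ℝ) : ℝ :=
  ∑ i : Fin n, ∑ j : Fin n, Λ x i j * pd f i x * pd g j x

noncomputable def Efun (f : (Fin n → ℝ) → ℝ) (x : Fin n → ℝ) : ℝ :=
  ∑ j : Fin n, X x j * pd f j x

lemma jB_eq (f g : (Fin n → ℝ) → ℝ) (x) :
    jacobiBracket n Λ X f g x = Afun Λ f g x + f x * Efun X g x - g x * Efun X f x := rfl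

variable {Λ X}

lemma Afun_antisymm (hΛanti : ∀ x, (Λ x)ᵀ = - Λ x) (f g : (Fin n → ℝ) → ℝ) (x) :
    Afun Λ f g x = - Afun Λ g f x := by
  have hΛ : ∀ i j, Λ x j i = - Λ x i j := fun i j => by
    have := congrFun (congrFun (hΛanti x) i) j
    simpa [Matrix.transpose_apply] using this
  rw [Afun, Finset.sum_comm]
  rw [Afun, ← Finset.sum_neg_distrib]
  refine Finset.sum_congr rfl fun j _ => ?_
  rw [← Finset.sum_neg_distrib]
  refine Finset.sum_congr rfl fun i _ => ?_
  rw [hΛ i j]; ring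

lemma Efun_add {u v : (Fin n → ℝ) → ℝ} {x} (hu : DifferentiableAt ℝ u x)
    (hv : DifferentiableAt ℝ v x) :
    Efun X (fun y => u y + v y) x = Efun X u x + Efun X v x := by
  rw [Efun, Efun, Efun, ← Finset.sum_add_distrib]
  exact Finset.sum_congr rfl fun j _ => by rw [pd_add hu hv]; ring

lemma Efun_mul {u v : (Fin n → ℝ) → ℝ} {x} (hu : DifferentiableAt ℝ u x)
    (hv : DifferentiableAt ℝ v x) :
    Efun X (fun y => u y * v y) x = u x * Efun X v x + v x * Efun X u x := by
  rw [Efun, Efun, Efun, Finset.mul_sum, Finset.mul_sum, ← Finset.sum_add_distrib]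
  exact Finset.sum_congr rfl fun j _ => by rw [pd_mul hu hv]; ring

lemma Efun_neg (u : (Fin n → ℝ) → ℝ) (x) :
    Efun X (fun y => -u y) x = - Efun X u x := by
  rw [Efun, Efun, ← Finset.sum_neg_distrib]
  exact Finset.sum_congr rfl fun j _ => by rw [pd_neg]; ring

lemma Afun_add_right (f : (Fin n → ℝ) → ℝ) {u v : (Fin n → ℝ) → ℝ} {x}
    (hu : DifferentiableAt ℝ u x) (hv : DifferentiableAt ℝ v x) :
    Afun Λ f (fun y => u y + v y) x = Afun Λ f u x + Afun Λ f v x := by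
  rw [Afun, Afun, Afun, ← Finset.sum_add_distrib]
  refine Finset.sum_congr rfl fun i _ => ?_
  rw [← Finset.sum_add_distrib]
  exact Finset.sum_congr rfl fun j _ => by rw [pd_add hu hv]; ring

lemma Afun_mul_right (f : (Fin n → ℝ) → ℝ) {u v : (Fin n → ℝ) → ℝ} {x}
    (hu : DifferentiableAt ℝ u x) (hv : DifferentiableAt ℝ v x) :
    Afun Λ f (fun y => u y * v y) x = u x * Afun Λ f v x + v x * Afun Λ f u x := by
  rw [Afun, Afun, Afun, Finset.mul_sum, Finset.mul_sum, ← Finset.sum_add_distrib]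
  refine Finset.sum_congr rfl fun i _ => ?_
  rw [Finset.mul_sum, Finset.mul_sum, ← Finset.sum_add_distrib]
  exact Finset.sum_congr rfl fun j _ => by rw [pd_mul hu hv]; ring

lemma Afun_neg_right (f u : (Fin n → ℝ) → ℝ) (x) :
    Afun Λ f (fun y => -u y) x = - Afun Λ f u x := by
  rw [Afun, Afun, ← Finset.sum_neg_distrib]
  refine Finset.sum_congr rfl fun i _ => ?_
  rw [← Finset.sum_neg_distrib]
  exact Finset.sum_congr rfl fun j _ => by rw [pd_neg]; ring

lemma Afun_const_left (c : ℝ) (g : (Fin n → ℝ) → ℝ) (x) :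
    Afun Λ (fun _ => c) g x = 0 := by
  simp [Afun, pd_const]

end
section
variable {Λ : (Fin n → ℝ) → Matrix (Fin n) (Fin n) ℝ} {X : (Fin n → ℝ) → Fin n → ℝ}

/-- `{1, f} = E f`. -/
lemma jB_one_left (f : (Fin n → ℝ) → ℝ) (x) :
    jacobiBracket n Λ X (fun _ => (1:ℝ)) f x = Efun X f x := by
  rw [jB_eq, Afun_const_left]
  simp [Efun, pd_const]

lemma jB_antisymm (hΛanti : ∀ x, (Λ x)ᵀ = - Λ x) (f g : (Fin n → ℝ) → ℝ) (x) :
    jacobiBracket n Λ X f g x = - jacobiBracket n Λ X g f x := by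
  rw [jB_eq, jB_eq, Afun_antisymm hΛanti]; ring

lemma jB_neg_right (f u : (Fin n → ℝ) → ℝ) (x) :
    jacobiBracket n Λ X f (fun y => -u y) x = - jacobiBracket n Λ X f u x := by
  rw [jB_eq, jB_eq, Afun_neg_right, Efun_neg]; ring

lemma jB_add_right (f : (Fin n → ℝ) → ℝ) {u v : (Fin n → ℝ) → ℝ} {x}
    (hu : DifferentiableAt ℝ u x) (hv : DifferentiableAt ℝ v x) :
    jacobiBracket n Λ X f (fun y => u y + v y) x
      = jacobiBracket n Λ X f u x + jacobiBracket n Λ X f v x := by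
  rw [jB_eq, jB_eq, jB_eq, Afun_add_right f hu hv, Efun_add hu hv]; ring

lemma jB_mul_right (f : (Fin n → ℝ) → ℝ) {u v : (Fin n → ℝ) → ℝ} {x}
    (hu : DifferentiableAt ℝ u x) (hv : DifferentiableAt ℝ v x) :
    jacobiBracket n Λ X f (fun y => u y * v y) x
      = u x * jacobiBracket n Λ X f v x + v x * jacobiBracket n Λ X f u x
        + u x * v x * jacobiBracket n Λ X (fun _ => (1:ℝ)) f x := by
  rw [jB_one_left, jB_eq, jB_eq, jB_eq, Afun_mul_right f hu hv, Efun_mul hu hv]; ring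

/-- Lemma B: components of the Hamiltonian field via the bracket. -/
lemma ham_component (u : (Fin n → ℝ) → ℝ) (x) (j : Fin n) :
    hamField n Λ X u x j
      = jacobiBracket n Λ X u (fun y => y j) x
        + x j * jacobiBracket n Λ X (fun _ => (1:ℝ)) u x := by
  rw [jB_one_left, jB_eq, hamField]
  have hA : Afun Λ u (fun y => y j) x = ∑ i : Fin n, Λ x i j * pd u i x := by
    rw [Afun]
    refine Finset.sum_congr rfl fun i _ => ?_
    simp [pd_proj, Finset.mul_sum, mul_ite]
  have hE : Efun X (fun y => y j) x = X x j := by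
    simp [Efun, pd_proj, mul_ite]
  rw [hA, hE]; ring

/-- Lemma A: derivative of `h` along `X_f`. -/
lemma sum_ham_pd (f h : (Fin n → ℝ) → ℝ) (x) :
    ∑ j : Fin n, hamField n Λ X f x j * pd h j x
      = jacobiBracket n Λ X f h x
        + h x * jacobiBracket n Λ X (fun _ => (1:ℝ)) f x := by
  rw [jB_one_left, jB_eq]
  have : ∑ j : Fin n, hamField n Λ X f x j * pd h j x
      = Afun Λ f h x + f x * Efun X h x := by
    rw [Afun, Finset.sum_comm, Efun, Finset.mul_sum, ← Finset.sum_add_distrib]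
    refine Finset.sum_congr rfl fun j _ => ?_
    rw [hamField, add_mul, Finset.sum_mul]; ring
  rw [this]; ring

end
section
variable {Λ : (Fin n → ℝ) → Matrix (Fin n) (Fin n) ℝ} {X : (Fin n → ℝ) → Fin n → ℝ}
variable (hΛ : ∀ i j, ContDiff ℝ (⊤ : ℕ∞) (fun x => Λ x i j)) (hX : ContDiff ℝ (⊤ : ℕ∞) X)

include hΛ hX in
lemma jB_contDiff {f g : (Fin n → ℝ) → ℝ} (hf : ContDiff ℝ (⊤ : ℕ∞) f) (hg : ContDiff ℝ (⊤ : ℕ∞) g) :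
    ContDiff ℝ (⊤ : ℕ∞) (jacobiBracket n Λ X f g) := by
  have hXj : ∀ j, ContDiff ℝ (⊤ : ℕ∞) (fun x => X x j) := fun j => (contDiff_pi.mp hX) j
  refine ContDiff.sub (ContDiff.add ?_ ?_) ?_
  · exact ContDiff.sum fun i _ => ContDiff.sum fun j _ =>
      ((hΛ i j).mul (pd_contDiff hf i)).mul (pd_contDiff hg j)
  · exact hf.mul (ContDiff.sum fun j _ => (hXj j).mul (pd_contDiff hg j))
  · exact hg.mul (ContDiff.sum fun j _ => (hXj j).mul (pd_contDiff hf j))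

include hΛ hX in
lemma ham_contDiff {f : (Fin n → ℝ) → ℝ} (hf : ContDiff ℝ (⊤ : ℕ∞) f) (j : Fin n) :
    ContDiff ℝ (⊤ : ℕ∞) (fun x => hamField n Λ X f x j) := by
  have hXj : ContDiff ℝ (⊤ : ℕ∞) (fun x => X x j) := (contDiff_pi.mp hX) j
  exact (ContDiff.sum fun i _ => (hΛ i j).mul (pd_contDiff hf i)).add (hf.mul hXj)

end

lemma fderiv_comp_sum {W : (Fin n → ℝ) → Fin n → ℝ} {x : Fin n → ℝ}
    (hW : ∀ j, DifferentiableAt ℝ (fun y => W y j) x) (v : Fin n → ℝ) (j : Fin n) :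
    fderiv ℝ W x v j = ∑ i : Fin n, v i * pd (fun y => W y j) i x := by
  rw [fderiv_pi hW]
  have hv : v = ∑ i : Fin n, v i • (Pi.single i 1 : Fin n → ℝ) := by
    funext k
    simp [Pi.single_apply, Finset.sum_apply]
  conv_lhs => rw [hv]
  rw [map_sum]
  simp only [map_smul]
  rw [Finset.sum_apply]
  simp [pd, ContinuousLinearMap.pi_apply]
/-- If the Jacobi bracket satisfies the Jacobi identity, then `f ↦ X_f` is a Lie algebra
morphism: `[X_f, X_g] = X_{{f,g}}`. -/
theorem hamField_lie_morphism (n : ℕ)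
    (Λ : (Fin n → ℝ) → Matrix (Fin n) (Fin n) ℝ) (X : (Fin n → ℝ) → Fin n → ℝ)
    (hΛ : ∀ i j, ContDiff ℝ (⊤ : ℕ∞) (fun x => Λ x i j))
    (hΛanti : ∀ x, (Λ x)ᵀ = - Λ x)
    (hX : ContDiff ℝ (⊤ : ℕ∞) X)
    (hjacobi : ∀ f g h : (Fin n → ℝ) → ℝ, ContDiff ℝ (⊤ : ℕ∞) f → ContDiff ℝ (⊤ : ℕ∞) g →
      ContDiff ℝ (⊤ : ℕ∞) h →
      ∀ x, jacobiBracket n Λ X f (jacobiBracket n Λ X g h) x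
        + jacobiBracket n Λ X g (jacobiBracket n Λ X h f) x
        + jacobiBracket n Λ X h (jacobiBracket n Λ X f g) x = 0)
    (f g : (Fin n → ℝ) → ℝ) (hf : ContDiff ℝ (⊤ : ℕ∞) f) (hg : ContDiff ℝ (⊤ : ℕ∞) g) :
    ∀ x, vfBracket n (hamField n Λ X f) (hamField n Λ X g) x
      = hamField n Λ X (jacobiBracket n Λ X f g) x := by
  intro x
  funext j
  set one : (Fin n → ℝ) → ℝ := fun _ => (1:ℝ) with hone
  set π : (Fin n → ℝ) → ℝ := fun y => y j with hπdef
  have hπc : ContDiff ℝ (⊤ : ℕ∞) π :=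
    (ContinuousLinearMap.proj j : (Fin n → ℝ) →L[ℝ] ℝ).contDiff
  have h1c : ContDiff ℝ (⊤ : ℕ∞) one := contDiff_const
  -- differentiability helpers
  have dAt : ∀ {u : (Fin n → ℝ) → ℝ}, ContDiff ℝ (⊤ : ℕ∞) u → DifferentiableAt ℝ u x :=
    fun hu => (hu.differentiable (by simp)).differentiableAt
  have hgπ := jB_contDiff hΛ hX hg hπc
  have hfπ := jB_contDiff hΛ hX hf hπc
  have h1g := jB_contDiff hΛ hX h1c hg
  have h1f := jB_contDiff hΛ hX h1c hf
  have hfg := jB_contDiff hΛ hX hf hg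
  have hVd : ∀ k, DifferentiableAt ℝ (fun y => hamField n Λ X f y k) x :=
    fun k => dAt (ham_contDiff hΛ hX hf k)
  have hWd : ∀ k, DifferentiableAt ℝ (fun y => hamField n Λ X g y k) x :=
    fun k => dAt (ham_contDiff hΛ hX hg k)
  -- Step 1: expand the vector-field bracket component
  have lhs_eq : vfBracket n (hamField n Λ X f) (hamField n Λ X g) x j
      = (∑ i : Fin n, hamField n Λ X f x i * pd (fun y => hamField n Λ X g y j) i x)
        - (∑ i : Fin n, hamField n Λ X g x i * pd (fun y => hamField n Λ X f y j) i x) := by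
    show fderiv ℝ (hamField n Λ X g) x (hamField n Λ X f x) j
        - fderiv ℝ (hamField n Λ X f) x (hamField n Λ X g x) j = _
    rw [fderiv_comp_sum hWd _ j, fderiv_comp_sum hVd _ j]
  rw [lhs_eq, sum_ham_pd f (fun y => hamField n Λ X g y j) x,
    sum_ham_pd g (fun y => hamField n Λ X f y j) x]
  -- Step 2: rewrite hamField components via the bracket
  have hWfun : (fun y => hamField n Λ X g y j)
      = fun y => jacobiBracket n Λ X g π y + y j * jacobiBracket n Λ X one g y :=
    funext fun y => ham_component g y j
  have hVfun : (fun y => hamField n Λ X f y j)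
      = fun y => jacobiBracket n Λ X f π y + y j * jacobiBracket n Λ X one f y :=
    funext fun y => ham_component f y j
  rw [hWfun, hVfun]
  -- Step 3: expand the outer brackets using additivity and the product rule
  have expand : ∀ (u v : (Fin n → ℝ) → ℝ), ContDiff ℝ (⊤ : ℕ∞) u →
      ContDiff ℝ (⊤ : ℕ∞) (jacobiBracket n Λ X u π) → ContDiff ℝ (⊤ : ℕ∞) (jacobiBracket n Λ X one u) →
      jacobiBracket n Λ X v
        (fun y => jacobiBracket n Λ X u π y + y j * jacobiBracket n Λ X one u y) x
      = jacobiBracket n Λ X v (jacobiBracket n Λ X u π) x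
        + (x j * jacobiBracket n Λ X v (jacobiBracket n Λ X one u) x
          + jacobiBracket n Λ X one u x * jacobiBracket n Λ X v π x
          + x j * jacobiBracket n Λ X one u x * jacobiBracket n Λ X one v x) := by
    intro u v hu huπ h1u
    rw [jB_add_right v (dAt huπ) ((dAt hπc).fun_mul (dAt h1u)),
      jB_mul_right v (dAt hπc) (dAt h1u)]
  rw [expand g f hg hgπ h1g, expand f g hf hfπ h1f]
  -- Step 4: rewrite the right-hand side
  rw [ham_component (jacobiBracket n Λ X f g) x j]
  -- Step 5: Jacobi identities
  have J1 := hjacobi f g π hf hg hπc x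
  have J2 := hjacobi f g one hf hg h1c x
  have e1 : jacobiBracket n Λ X π f = fun y => -(jacobiBracket n Λ X f π y) :=
    funext fun y => jB_antisymm hΛanti π f y
  have e2 : jacobiBracket n Λ X g one = fun y => -(jacobiBracket n Λ X one g y) :=
    funext fun y => jB_antisymm hΛanti g one y
  rw [e1, jB_neg_right] at J1
  rw [jB_antisymm hΛanti π (jacobiBracket n Λ X f g) x] at J1
  rw [e2, jB_neg_right] at J2
  rw [ham_component f x j, ham_component g x j]
  linear_combination J1 - x j * J2
end

section
/- Let Λ : ℝⁿ → Matrix (Fin n) (Fin n) ℝ be a smooth map with Λ(x) antisymmetric for every x, and let X : ℝⁿ → ℝⁿ be smooth. Assume the associated Jacobi bracket on ℝⁿ satisfies the Jacobi identity {f,{g,h}} + {g,{h,f}} + {h,{f,g}} = 0 for all smooth f, g, h : ℝⁿ → ℝ. Then the homogenized bracket on ℝⁿ × ℝ, {F,G}^(x,t) = e^{−t} [ Σ_{i,j} Λ(x)_{ij} ∂_{xᵢ}F ∂_{xⱼ}G + (∂ₜF)(Σⱼ X(x)ⱼ ∂_{xⱼ}G) − (∂ₜG)(Σⱼ X(x)ⱼ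 ∂_{xⱼ}F) ], satisfies the Jacobi identity {F,{G,H}^}^ + {G,{H,F}^}^ + {H,{F,G}^}^ = 0 for all smooth F, G, H : ℝⁿ × ℝ → ℝ; i.e., the homogenized bivector defines a Poisson bracket. -/
open scoped Matrix

/-- The partial derivative of `F : ℝⁿ × ℝ → ℝ` in the `i`-th coordinate of the `ℝⁿ` factor. -/
noncomputable def pdx {n : ℕ} (F : (Fin n → ℝ) × ℝ → ℝ) (i : Fin n)
    (p : (Fin n → ℝ) × ℝ) : ℝ :=
  fderiv ℝ F p (Pi.single i 1, 0)

/-- The partial derivative of `F : ℝⁿ × ℝ → ℝ` in the last coordinate `t`. -/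
noncomputable def pdt {n : ℕ} (F : (Fin n → ℝ) × ℝ → ℝ) (p : (Fin n → ℝ) × ℝ) : ℝ :=
  fderiv ℝ F p (0, 1)

/-- The homogenized Poisson bracket on `ℝⁿ × ℝ` associated with `(Λ, X)`. -/
noncomputable def homBracket (n : ℕ) (Λ : (Fin n → ℝ) → Matrix (Fin n) (Fin n) ℝ)
    (X : (Fin n → ℝ) → Fin n → ℝ) (F G : (Fin n → ℝ) × ℝ → ℝ) :
    (Fin n → ℝ) × ℝ → ℝ :=
  fun p =>
    Real.exp (-p.2) *
      ((∑ i : Fin n, ∑ j : Fin n, Λ p.1 i j * pdx F i p * pdx G j p)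
        + pdt F p * (∑ j : Fin n, X p.1 j * pdx G j p)
        - pdt G p * (∑ j : Fin n, X p.1 j * pdx F j p))

section General

variable {E : Type*} [NormedAddCommGroup E] [NormedSpace ℝ E]

/-- A general bracket associated with a "bivector" `π` and directions `v`. -/
noncomputable def br {m : ℕ} (π : E → Fin m → Fin m → ℝ) (v : Fin m → E)
    (F G : E → ℝ) : E → ℝ :=
  fun p => ∑ a, ∑ b, π p a b * fderiv ℝ F p (v a) * fderiv ℝ G p (v b)

lemma contDiff_dv {F : E → ℝ} (hF : ContDiff ℝ (⊤ : ℕ∞) F) (w : E) :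
    ContDiff ℝ (⊤ : ℕ∞) (fun p => fderiv ℝ F p w) :=
  (hF.fderiv_right (by simp)).clm_apply contDiff_const

lemma fderiv_br_apply {m : ℕ} {π : E → Fin m → Fin m → ℝ} {v : Fin m → E} {F G : E → ℝ}
    (hπ : ∀ a b, ContDiff ℝ (⊤ : ℕ∞) fun p => π p a b) (hF : ContDiff ℝ (⊤ : ℕ∞) F)
    (hG : ContDiff ℝ (⊤ : ℕ∞) G) (p u : E) :
    fderiv ℝ (br π v F G) p u =
      ∑ a, ∑ b,
        (fderiv ℝ (fun q => π q a b) p u * fderiv ℝ F p (v a) * fderiv ℝ G p (v b)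
          + π p a b * fderiv ℝ (fun q => fderiv ℝ F q (v a)) p u * fderiv ℝ G p (v b)
          + π p a b * fderiv ℝ F p (v a) * fderiv ℝ (fun q => fderiv ℝ G q (v b)) p u) := by
  have h : HasFDerivAt (br π v F G)
      (∑ a : Fin m, ∑ b : Fin m,
        ((fderiv ℝ F p (v a) * fderiv ℝ G p (v b)) • fderiv ℝ (fun q => π q a b) p
        + (π p a b * fderiv ℝ G p (v b)) • fderiv ℝ (fun q => fderiv ℝ F q (v a)) p
        + (π p a b * fderiv ℝ F p (v a)) • fderiv ℝ (fun q => fderiv ℝ G q (v b)) p)) p := by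
    refine HasFDerivAt.fun_sum fun a _ => HasFDerivAt.fun_sum fun b _ => ?_
    have h1 : HasFDerivAt (fun q => π q a b) (fderiv ℝ (fun q => π q a b) p) p :=
      (((hπ a b).differentiable (by simp)) p).hasFDerivAt
    have h2 : HasFDerivAt (fun q => fderiv ℝ F q (v a))
        (fderiv ℝ (fun q => fderiv ℝ F q (v a)) p) p :=
      (((contDiff_dv hF (v a)).differentiable (by simp)) p).hasFDerivAt
    have h3 : HasFDerivAt (fun q => fderiv ℝ G q (v b))
        (fderiv ℝ (fun q => fderiv ℝ G q (v b)) p) p :=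
      (((contDiff_dv hG (v b)).differentiable (by simp)) p).hasFDerivAt
    have := (h1.fun_mul h2).fun_mul h3
    refine this.congr_fderiv ?_
    ext w
    simp [ContinuousLinearMap.add_apply, ContinuousLinearMap.smul_apply, smul_eq_mul]
    ring
  rw [h.fderiv]
  simp only [ContinuousLinearMap.sum_apply, ContinuousLinearMap.add_apply,
    ContinuousLinearMap.smul_apply, smul_eq_mul]
  refine Finset.sum_congr rfl fun a _ => Finset.sum_congr rfl fun b _ => ?_
  ring

lemma D2_symm {F : E → ℝ} (hF : ContDiff ℝ (⊤ : ℕ∞) F) (p u w : E) :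
    fderiv ℝ (fun q => fderiv ℝ F q w) p u = fderiv ℝ (fun q => fderiv ℝ F q u) p w := by
  have hd : ∀ z : E, fderiv ℝ (fun q => fderiv ℝ F q z) p
      = (fderiv ℝ (fderiv ℝ F) p).flip z := by
    intro z
    have h1 : DifferentiableAt ℝ (fderiv ℝ F) p :=
      ((hF.fderiv_right (m := 1) (WithTop.coe_le_coe.mpr le_top)).differentiable one_ne_zero) p
    rw [fderiv_clm_apply h1 (differentiableAt_const z)]
    ext y
    simp
  have hsymm : ∀ a b : E, fderiv ℝ (fderiv ℝ F) p a b = fderiv ℝ (fderiv ℝ F) p b a :=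
    fun a b => second_derivative_symmetric
      (fun y => ((hF.differentiable (by simp)) y).hasFDerivAt)
      (((hF.fderiv_right (m := 1) (WithTop.coe_le_coe.mpr le_top)).differentiable one_ne_zero) p).hasFDerivAt a b
  rw [hd w, hd u]
  simpa using hsymm u w

lemma cancel {m : ℕ} (A S : Fin m → Fin m → ℝ) (u w : Fin m → ℝ)
    (hA : ∀ a b, A b a = -A a b) (hS : ∀ a b, S a b = S b a) :
    (∑ a, ∑ b, ∑ c, ∑ d, A a b * u a * (A c d * S b c * w d))
      + (∑ a, ∑ b, ∑ c, ∑ d, A a b * w a * (A c d * u c * S b d)) = 0 := by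
  have key : (∑ a, ∑ b, ∑ c, ∑ d, A a b * w a * (A c d * u c * S b d))
      = ∑ a, ∑ b, ∑ c, ∑ d, -(A a b * u a * (A c d * S b c * w d)) := by
    have e1 : (∑ a, ∑ b, ∑ c, ∑ d, A a b * w a * (A c d * u c * S b d))
        = ∑ x : Fin m × Fin m × Fin m × Fin m,
          A x.1 x.2.1 * w x.1 * (A x.2.2.1 x.2.2.2 * u x.2.2.1 * S x.2.1 x.2.2.2) := by
      simp [Fintype.sum_prod_type]
    have e2 : (∑ a, ∑ b, ∑ c, ∑ d, -(A a b * u a * (A c d * S b c * w d)))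
        = ∑ x : Fin m × Fin m × Fin m × Fin m,
          -(A x.1 x.2.1 * u x.1 * (A x.2.2.1 x.2.2.2 * S x.2.1 x.2.2.1 * w x.2.2.2)) := by
      simp [Fintype.sum_prod_type]
    rw [e1, e2]
    refine Fintype.sum_equiv ⟨fun x => (x.2.2.1, x.2.2.2, x.2.1, x.1),
      fun x => (x.2.2.2, x.2.2.1, x.1, x.2.1), fun x => rfl, fun x => rfl⟩ _ _ ?_
    intro x
    obtain ⟨a, b, c, d⟩ := x
    simp only [Equiv.coe_fn_mk]
    rw [hA a b, hS d b]
    ring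
  rw [key]
  simp

/-- The first-order part of the Jacobiator of a bivector bracket. -/
def jacSum {m : ℕ} (A : Fin m → Fin m → ℝ) (A' : Fin m → Fin m → Fin m → ℝ)
    (x y z : Fin m → ℝ) : ℝ :=
  (∑ a, ∑ b, ∑ c, ∑ d, A a b * x a * (A' b c d * y c * z d))
  + (∑ a, ∑ b, ∑ c, ∑ d, A a b * y a * (A' b c d * z c * x d))
  + (∑ a, ∑ b, ∑ c, ∑ d, A a b * z a * (A' b c d * x c * y d))

lemma expand3 {m : ℕ} (f : Fin m → Fin m → ℝ) (g1 g2 g3 : Fin m → Fin m → Fin m → Fin m → ℝ) :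
    (∑ a, ∑ b, f a b * ∑ c, ∑ d, (g1 a b c d + g2 a b c d + g3 a b c d))
    = (∑ a, ∑ b, ∑ c, ∑ d, f a b * g1 a b c d)
      + (∑ a, ∑ b, ∑ c, ∑ d, f a b * g2 a b c d)
      + (∑ a, ∑ b, ∑ c, ∑ d, f a b * g3 a b c d) := by
  simp [Finset.mul_sum, mul_add, Finset.sum_add_distrib]

/-- The Jacobiator of a bivector bracket depends only on the first derivatives of the
arguments: it is given by the first-order expression `jacSum`. -/
theorem br_jacobi {m : ℕ} {π : E → Fin m → Fin m → ℝ} {v : Fin m → E}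
    (hπ : ∀ a b, ContDiff ℝ (⊤ : ℕ∞) fun p => π p a b)
    (hanti : ∀ p a b, π p b a = -π p a b)
    {F G H : E → ℝ} (hF : ContDiff ℝ (⊤ : ℕ∞) F) (hG : ContDiff ℝ (⊤ : ℕ∞) G) (hH : ContDiff ℝ (⊤ : ℕ∞) H)
    (p : E) :
    br π v F (br π v G H) p + br π v G (br π v H F) p + br π v H (br π v F G) p
    = jacSum (π p) (fun b c d => fderiv ℝ (fun q => π q c d) p (v b))
        (fun a => fderiv ℝ F p (v a)) (fun a => fderiv ℝ G p (v a))
        (fun a => fderiv ℝ H p (v a)) := by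
  set dF := fun a => fderiv ℝ F p (v a) with hdF
  set dG := fun a => fderiv ℝ G p (v a) with hdG
  set dH := fun a => fderiv ℝ H p (v a) with hdH
  have e1 : br π v F (br π v G H) p
      = (∑ a, ∑ b, ∑ c, ∑ d, (π p a b * dF a)
          * (fderiv ℝ (fun q => π q c d) p (v b) * dG c * dH d))
        + (∑ a, ∑ b, ∑ c, ∑ d, (π p a b * dF a)
          * (π p c d * fderiv ℝ (fun q => fderiv ℝ G q (v c)) p (v b) * dH d))
        + (∑ a, ∑ b, ∑ c, ∑ d, (π p a b * dF a)
          * (π p c d * dG c * fderiv ℝ (fun q => fderiv ℝ H q (v d)) p (v b))) := by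
    rw [← expand3]
    show (∑ a, ∑ b, π p a b * fderiv ℝ F p (v a) * fderiv ℝ (br π v G H) p (v b)) = _
    refine Finset.sum_congr rfl fun a _ => Finset.sum_congr rfl fun b _ => ?_
    rw [fderiv_br_apply hπ hG hH p (v b), mul_assoc]
  have e2 : br π v G (br π v H F) p
      = (∑ a, ∑ b, ∑ c, ∑ d, (π p a b * dG a)
          * (fderiv ℝ (fun q => π q c d) p (v b) * dH c * dF d))
        + (∑ a, ∑ b, ∑ c, ∑ d, (π p a b * dG a)
          * (π p c d * fderiv ℝ (fun q => fderiv ℝ H q (v c)) p (v b) * dF d))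
        + (∑ a, ∑ b, ∑ c, ∑ d, (π p a b * dG a)
          * (π p c d * dH c * fderiv ℝ (fun q => fderiv ℝ F q (v d)) p (v b))) := by
    rw [← expand3]
    show (∑ a, ∑ b, π p a b * fderiv ℝ G p (v a) * fderiv ℝ (br π v H F) p (v b)) = _
    refine Finset.sum_congr rfl fun a _ => Finset.sum_congr rfl fun b _ => ?_
    rw [fderiv_br_apply hπ hH hF p (v b), mul_assoc]
  have e3 : br π v H (br π v F G) p
      = (∑ a, ∑ b, ∑ c, ∑ d, (π p a b * dH a)
          * (fderiv ℝ (fun q => π q c d) p (v b) * dF c * dG d))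
        + (∑ a, ∑ b, ∑ c, ∑ d, (π p a b * dH a)
          * (π p c d * fderiv ℝ (fun q => fderiv ℝ F q (v c)) p (v b) * dG d))
        + (∑ a, ∑ b, ∑ c, ∑ d, (π p a b * dH a)
          * (π p c d * dF c * fderiv ℝ (fun q => fderiv ℝ G q (v d)) p (v b))) := by
    rw [← expand3]
    show (∑ a, ∑ b, π p a b * fderiv ℝ H p (v a) * fderiv ℝ (br π v F G) p (v b)) = _
    refine Finset.sum_congr rfl fun a _ => Finset.sum_congr rfl fun b _ => ?_
    rw [fderiv_br_apply hπ hF hG p (v b), mul_assoc]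
  have c1 := cancel (π p) (fun b c => fderiv ℝ (fun q => fderiv ℝ G q (v c)) p (v b))
    dF dH (hanti p) (fun a b => D2_symm hG p (v a) (v b))
  have c2 := cancel (π p) (fun b c => fderiv ℝ (fun q => fderiv ℝ H q (v c)) p (v b))
    dG dF (hanti p) (fun a b => D2_symm hH p (v a) (v b))
  have c3 := cancel (π p) (fun b c => fderiv ℝ (fun q => fderiv ℝ F q (v c)) p (v b))
    dH dG (hanti p) (fun a b => D2_symm hF p (v a) (v b))
  rw [e1, e2, e3]
  simp only [jacSum]
  linarith [c1, c2, c3]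

end General

/-- The homogenized bivector on `ℝⁿ × ℝ`. -/
noncomputable def pihat (n : ℕ) (Λ : (Fin n → ℝ) → Matrix (Fin n) (Fin n) ℝ)
    (X : (Fin n → ℝ) → Fin n → ℝ) : ((Fin n → ℝ) × ℝ) → Fin (n+1) → Fin (n+1) → ℝ :=
  fun p => Fin.snoc (fun i => Fin.snoc (fun j => Real.exp (-p.2) * Λ p.1 i j)
      (-(Real.exp (-p.2) * X p.1 i)))
    (Fin.snoc (fun j => Real.exp (-p.2) * X p.1 j) 0)

/-- The coordinate directions on `ℝⁿ × ℝ`. -/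
noncomputable def vhat (n : ℕ) : Fin (n+1) → (Fin n → ℝ) × ℝ :=
  Fin.snoc (fun i => (Pi.single i 1, 0)) (0, 1)

lemma homBracket_eq_br (n : ℕ) (Λ : (Fin n → ℝ) → Matrix (Fin n) (Fin n) ℝ)
    (X : (Fin n → ℝ) → Fin n → ℝ) (F G : (Fin n → ℝ) × ℝ → ℝ) :
    homBracket n Λ X F G = br (pihat n Λ X) (vhat n) F G := by
  funext p
  simp only [br, Fin.sum_univ_castSucc, pihat, vhat, Fin.snoc_castSucc, Fin.snoc_last,
    homBracket, pdx, pdt]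
  rw [Finset.sum_add_distrib]
  simp only [zero_mul, add_zero, mul_sub, mul_add]
  have l1 : Real.exp (-p.2) * (∑ x : Fin n, ∑ y : Fin n,
        Λ p.1 x y * fderiv ℝ F p (Pi.single x 1, 0) * fderiv ℝ G p (Pi.single y 1, 0))
      = ∑ x : Fin n, ∑ y : Fin n, Real.exp (-p.2) * Λ p.1 x y
          * fderiv ℝ F p (Pi.single x 1, 0) * fderiv ℝ G p (Pi.single y 1, 0) := by
    rw [Finset.mul_sum]
    exact Finset.sum_congr rfl fun x _ => by
      rw [Finset.mul_sum]; exact Finset.sum_congr rfl fun y _ => by ring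
  have l2 : Real.exp (-p.2) * (fderiv ℝ F p (0,1)
        * ∑ x : Fin n, X p.1 x * fderiv ℝ G p (Pi.single x 1, 0))
      = ∑ x : Fin n, Real.exp (-p.2) * X p.1 x * fderiv ℝ F p (0,1)
          * fderiv ℝ G p (Pi.single x 1, 0) := by
    rw [Finset.mul_sum, Finset.mul_sum]
    exact Finset.sum_congr rfl fun x _ => by ring
  have l3 : Real.exp (-p.2) * (fderiv ℝ G p (0,1)
        * ∑ x : Fin n, X p.1 x * fderiv ℝ F p (Pi.single x 1, 0))
      = ∑ x : Fin n, Real.exp (-p.2) * X p.1 x * fderiv ℝ F p (Pi.single x 1, 0)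
          * fderiv ℝ G p (0,1) := by
    rw [Finset.mul_sum, Finset.mul_sum]
    exact Finset.sum_congr rfl fun x _ => by ring
  have l4 : (∑ x : Fin n, -(Real.exp (-p.2) * X p.1 x) * fderiv ℝ F p (Pi.single x 1, 0)
        * fderiv ℝ G p (0,1))
      = -∑ x : Fin n, Real.exp (-p.2) * X p.1 x * fderiv ℝ F p (Pi.single x 1, 0)
          * fderiv ℝ G p (0,1) := by
    rw [← Finset.sum_neg_distrib]
    exact Finset.sum_congr rfl fun x _ => by ring
  rw [l1, l2, l3, l4]
  ring

lemma contDiff_pihat {n : ℕ} {Λ : (Fin n → ℝ) → Matrix (Fin n) (Fin n) ℝ}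
    {X : (Fin n → ℝ) → Fin n → ℝ} (hΛ : ∀ i j, ContDiff ℝ (⊤ : ℕ∞) (fun x => Λ x i j))
    (hX : ContDiff ℝ (⊤ : ℕ∞) X) (a b : Fin (n+1)) :
    ContDiff ℝ (⊤ : ℕ∞) (fun p => pihat n Λ X p a b) := by
  have hexp : ContDiff ℝ (⊤ : ℕ∞) (fun p : (Fin n → ℝ) × ℝ => Real.exp (-p.2)) :=
    Real.contDiff_exp.comp contDiff_snd.neg
  refine Fin.lastCases ?_ ?_ a
  · refine Fin.lastCases ?_ ?_ b
    · simp only [pihat, Fin.snoc_last]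
      exact contDiff_const
    · intro j
      simp only [pihat, Fin.snoc_last, Fin.snoc_castSucc]
      exact hexp.mul ((contDiff_pi.mp hX j).comp contDiff_fst)
  · intro i
    refine Fin.lastCases ?_ ?_ b
    · simp only [pihat, Fin.snoc_last, Fin.snoc_castSucc]
      exact (hexp.mul ((contDiff_pi.mp hX i).comp contDiff_fst)).neg
    · intro j
      simp only [pihat, Fin.snoc_castSucc]
      exact hexp.mul ((hΛ i j).comp contDiff_fst)

lemma pihat_anti {n : ℕ} {Λ : (Fin n → ℝ) → Matrix (Fin n) (Fin n) ℝ}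
    {X : (Fin n → ℝ) → Fin n → ℝ} (hΛanti : ∀ x, (Λ x)ᵀ = - Λ x)
    (p : (Fin n → ℝ) × ℝ) (a b : Fin (n+1)) :
    pihat n Λ X p b a = -pihat n Λ X p a b := by
  have hΛ' : ∀ i j, Λ p.1 j i = -Λ p.1 i j := by
    intro i j
    have := congrFun (congrFun (hΛanti p.1) i) j
    simpa [Matrix.transpose_apply, Matrix.neg_apply] using this
  refine Fin.lastCases ?_ ?_ a
  · refine Fin.lastCases ?_ ?_ b
    · simp [pihat]
    · intro j
      simp [pihat]
  · intro i
    refine Fin.lastCases ?_ ?_ b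
    · simp [pihat]
    · intro j
      simp only [pihat, Fin.snoc_castSucc]
      rw [hΛ' i j]
      ring

/-- Lift of a function on `ℝⁿ` to `ℝⁿ × ℝ`. -/
noncomputable def lift (n : ℕ) (f : (Fin n → ℝ) → ℝ) : (Fin n → ℝ) × ℝ → ℝ :=
  fun q => Real.exp q.2 * f q.1

lemma contDiff_lift {n : ℕ} {f : (Fin n → ℝ) → ℝ} (hf : ContDiff ℝ (⊤ : ℕ∞) f) :
    ContDiff ℝ (⊤ : ℕ∞) (lift n f) :=
  (Real.contDiff_exp.comp contDiff_snd).mul (hf.comp contDiff_fst)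

lemma fderiv_lift {n : ℕ} {f : (Fin n → ℝ) → ℝ} (hf : ContDiff ℝ (⊤ : ℕ∞) f)
    (p : (Fin n → ℝ) × ℝ) (u : Fin n → ℝ) (s : ℝ) :
    fderiv ℝ (lift n f) p (u, s)
      = Real.exp p.2 * f p.1 * s + Real.exp p.2 * fderiv ℝ f p.1 u := by
  have h1 : HasFDerivAt (fun q : (Fin n → ℝ) × ℝ => Real.exp q.2)
      (Real.exp p.2 • ContinuousLinearMap.snd ℝ (Fin n → ℝ) ℝ) p :=
    (hasFDerivAt_snd (p := p)).exp
  have h2 : HasFDerivAt (fun q : (Fin n → ℝ) × ℝ => f q.1)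
      ((fderiv ℝ f p.1).comp (ContinuousLinearMap.fst ℝ (Fin n → ℝ) ℝ)) p :=
    (((hf.differentiable (by simp)) p.1).hasFDerivAt).comp p hasFDerivAt_fst
  have h' : HasFDerivAt (lift n f) _ p := h1.mul h2
  rw [h'.fderiv]
  simp [ContinuousLinearMap.add_apply, ContinuousLinearMap.smul_apply, smul_eq_mul]
  ring

lemma pdx_lift {n : ℕ} {f : (Fin n → ℝ) → ℝ} (hf : ContDiff ℝ (⊤ : ℕ∞) f) (i : Fin n)
    (p : (Fin n → ℝ) × ℝ) : pdx (lift n f) i p = Real.exp p.2 * pd f i p.1 := by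
  rw [pdx, fderiv_lift hf]; simp [pd]

lemma pdt_lift {n : ℕ} {f : (Fin n → ℝ) → ℝ} (hf : ContDiff ℝ (⊤ : ℕ∞) f)
    (p : (Fin n → ℝ) × ℝ) : pdt (lift n f) p = Real.exp p.2 * f p.1 := by
  rw [pdt, fderiv_lift hf]; simp

lemma hom_lift {n : ℕ} (Λ : (Fin n → ℝ) → Matrix (Fin n) (Fin n) ℝ)
    (X : (Fin n → ℝ) → Fin n → ℝ) {f g : (Fin n → ℝ) → ℝ}
    (hf : ContDiff ℝ (⊤ : ℕ∞) f) (hg : ContDiff ℝ (⊤ : ℕ∞) g) :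
    homBracket n Λ X (lift n f) (lift n g) = lift n (jacobiBracket n Λ X f g) := by
  funext q
  simp only [homBracket, pdx_lift hf, pdx_lift hg, pdt_lift hf, pdt_lift hg,
    lift, jacobiBracket]
  have m1 : (∑ i : Fin n, ∑ j : Fin n, Λ q.1 i j * (Real.exp q.2 * pd f i q.1)
        * (Real.exp q.2 * pd g j q.1))
      = Real.exp q.2 * Real.exp q.2 * ∑ i : Fin n, ∑ j : Fin n,
          Λ q.1 i j * pd f i q.1 * pd g j q.1 := by
    rw [Finset.mul_sum]
    refine Finset.sum_congr rfl fun i _ => ?_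
    rw [Finset.mul_sum]
    exact Finset.sum_congr rfl fun j _ => by ring
  have m2 : (∑ j : Fin n, X q.1 j * (Real.exp q.2 * pd g j q.1))
      = Real.exp q.2 * ∑ j : Fin n, X q.1 j * pd g j q.1 := by
    rw [Finset.mul_sum]; exact Finset.sum_congr rfl fun j _ => by ring
  have m3 : (∑ j : Fin n, X q.1 j * (Real.exp q.2 * pd f j q.1))
      = Real.exp q.2 * ∑ j : Fin n, X q.1 j * pd f j q.1 := by
    rw [Finset.mul_sum]; exact Finset.sum_congr rfl fun j _ => by ring
  rw [m1, m2, m3, Real.exp_neg]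
  have hne := Real.exp_ne_zero q.2
  field_simp

lemma contDiff_pd {n : ℕ} {f : (Fin n → ℝ) → ℝ} (hf : ContDiff ℝ (⊤ : ℕ∞) f) (i : Fin n) :
    ContDiff ℝ (⊤ : ℕ∞) (pd f i) :=
  (hf.fderiv_right (by simp)).clm_apply contDiff_const

lemma contDiff_jacobiBracket {n : ℕ} {Λ : (Fin n → ℝ) → Matrix (Fin n) (Fin n) ℝ}
    {X : (Fin n → ℝ) → Fin n → ℝ} (hΛ : ∀ i j, ContDiff ℝ (⊤ : ℕ∞) (fun x => Λ x i j))
    (hX : ContDiff ℝ (⊤ : ℕ∞) X) {f g : (Fin n → ℝ) → ℝ}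
    (hf : ContDiff ℝ (⊤ : ℕ∞) f) (hg : ContDiff ℝ (⊤ : ℕ∞) g) :
    ContDiff ℝ (⊤ : ℕ∞) (jacobiBracket n Λ X f g) := by
  unfold jacobiBracket
  refine ContDiff.sub (ContDiff.add ?_ ?_) ?_
  · exact ContDiff.sum fun i _ => ContDiff.sum fun j _ =>
      ((hΛ i j).mul (contDiff_pd hf i)).mul (contDiff_pd hg j)
  · exact hf.mul (ContDiff.sum fun j _ => (contDiff_pi.mp hX j).mul (contDiff_pd hg j))
  · exact hg.mul (ContDiff.sum fun j _ => (contDiff_pi.mp hX j).mul (contDiff_pd hf j))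

lemma contDiff_affine {n : ℕ} (e0 b : ℝ) (c : Fin n → ℝ) :
    ContDiff ℝ (⊤ : ℕ∞) (fun x : Fin n → ℝ => e0 * (b + ∑ j, c j * x j)) :=
  contDiff_const.mul (contDiff_const.add (ContDiff.sum fun j _ =>
    contDiff_const.mul (ContinuousLinearMap.proj j :
      (Fin n → ℝ) →L[ℝ] ℝ).contDiff))

lemma pd_affine {n : ℕ} (e0 b : ℝ) (c : Fin n → ℝ) (i : Fin n) (x : Fin n → ℝ) :
    pd (fun x : Fin n → ℝ => e0 * (b + ∑ j, c j * x j)) i x = e0 * c i := by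
  have h2 : HasFDerivAt (fun x : Fin n → ℝ => ∑ j, c j * x j)
      (∑ j : Fin n, c j • (ContinuousLinearMap.proj j : (Fin n → ℝ) →L[ℝ] ℝ)) x := by
    refine HasFDerivAt.fun_sum fun j _ => ?_
    exact ((ContinuousLinearMap.proj j :
      (Fin n → ℝ) →L[ℝ] ℝ).hasFDerivAt).const_mul (c j)
  have h3 : HasFDerivAt (fun x : Fin n → ℝ => e0 * (b + ∑ j, c j * x j))
      (e0 • ∑ j : Fin n, c j • (ContinuousLinearMap.proj j : (Fin n → ℝ) →L[ℝ] ℝ)) x :=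
    (h2.const_add b).const_mul e0
  rw [pd, h3.fderiv]
  simp [ContinuousLinearMap.sum_apply, Pi.single_apply, Finset.mul_sum]

lemma lift_affine_jet {n : ℕ} (F : (Fin n → ℝ) × ℝ → ℝ) (p : (Fin n → ℝ) × ℝ)
    (a : Fin (n+1)) :
    fderiv ℝ (lift n (fun x => Real.exp (-p.2)
        * ((pdt F p - ∑ j, pdx F j p * p.1 j) + ∑ j, pdx F j p * x j))) p (vhat n a)
      = fderiv ℝ F p (vhat n a) := by
  have hfc := contDiff_affine (n := n) (Real.exp (-p.2))
    (pdt F p - ∑ j, pdx F j p * p.1 j) (fun j => pdx F j p)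
  refine Fin.lastCases ?_ ?_ a
  · simp only [vhat, Fin.snoc_last]
    rw [fderiv_lift hfc p 0 1]
    simp only [map_zero, mul_one, mul_zero, add_zero]
    have : pdt F p - (∑ j, pdx F j p * p.1 j) + ∑ j, pdx F j p * p.1 j = pdt F p :=
      sub_add_cancel _ _
    rw [this, Real.exp_neg]
    rw [show fderiv ℝ F p ((0 : Fin n → ℝ), (1:ℝ)) = pdt F p from rfl]
    field_simp
  · intro i
    simp only [vhat, Fin.snoc_castSucc]
    rw [fderiv_lift hfc p (Pi.single i 1) 0]
    simp only [mul_zero, zero_add]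
    rw [show fderiv ℝ (fun x => Real.exp (-p.2)
        * ((pdt F p - ∑ j, pdx F j p * p.1 j) + ∑ j, pdx F j p * x j)) p.1 (Pi.single i 1)
      = pd (fun x => Real.exp (-p.2)
        * ((pdt F p - ∑ j, pdx F j p * p.1 j) + ∑ j, pdx F j p * x j)) i p.1 from rfl]
    rw [pd_affine]
    rw [show fderiv ℝ F p (Pi.single i 1, (0:ℝ)) = pdx F i p from rfl]
    rw [Real.exp_neg]
    field_simp

/-- If the Jacobi bracket on `ℝⁿ` satisfies the Jacobi identity, then the homogenized
bracket on `ℝⁿ × ℝ` satisfies the Jacobi identity, i.e. it is a Poisson bracket. -/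
theorem homBracket_jacobi_identity (n : ℕ)
    (Λ : (Fin n → ℝ) → Matrix (Fin n) (Fin n) ℝ) (X : (Fin n → ℝ) → Fin n → ℝ)
    (hΛ : ∀ i j, ContDiff ℝ (⊤ : ℕ∞) (fun x => Λ x i j))
    (hΛanti : ∀ x, (Λ x)ᵀ = - Λ x)
    (hX : ContDiff ℝ (⊤ : ℕ∞) X)
    (hjacobi : ∀ f g h : (Fin n → ℝ) → ℝ, ContDiff ℝ (⊤ : ℕ∞) f → ContDiff ℝ (⊤ : ℕ∞) g →
      ContDiff ℝ (⊤ : ℕ∞) h →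
      ∀ x, jacobiBracket n Λ X f (jacobiBracket n Λ X g h) x
        + jacobiBracket n Λ X g (jacobiBracket n Λ X h f) x
        + jacobiBracket n Λ X h (jacobiBracket n Λ X f g) x = 0) :
    ∀ F G H : (Fin n → ℝ) × ℝ → ℝ, ContDiff ℝ (⊤ : ℕ∞) F → ContDiff ℝ (⊤ : ℕ∞) G → ContDiff ℝ (⊤ : ℕ∞) H →
      ∀ p, homBracket n Λ X F (homBracket n Λ X G H) p
        + homBracket n Λ X G (homBracket n Λ X H F) p
        + homBracket n Λ X H (homBracket n Λ X F G) p = 0 := by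
  intro F G H hF hG hH p
  have hπ : ∀ a b, ContDiff ℝ (⊤ : ℕ∞) fun q => pihat n Λ X q a b :=
    fun a b => contDiff_pihat hΛ hX a b
  have hanti : ∀ q a b, pihat n Λ X q b a = -pihat n Λ X q a b :=
    fun q a b => pihat_anti hΛanti q a b
  simp only [homBracket_eq_br n Λ X]
  rw [br_jacobi hπ hanti hF hG hH p]
  set f := fun x : Fin n → ℝ => Real.exp (-p.2)
    * ((pdt F p - ∑ j, pdx F j p * p.1 j) + ∑ j, pdx F j p * x j) with hfdef
  set g := fun x : Fin n → ℝ => Real.exp (-p.2)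
    * ((pdt G p - ∑ j, pdx G j p * p.1 j) + ∑ j, pdx G j p * x j) with hgdef
  set h := fun x : Fin n → ℝ => Real.exp (-p.2)
    * ((pdt H p - ∑ j, pdx H j p * p.1 j) + ∑ j, pdx H j p * x j) with hhdef
  have hfc : ContDiff ℝ (⊤ : ℕ∞) f := contDiff_affine _ _ _
  have hgc : ContDiff ℝ (⊤ : ℕ∞) g := contDiff_affine _ _ _
  have hhc : ContDiff ℝ (⊤ : ℕ∞) h := contDiff_affine _ _ _
  have eF : (fun a => fderiv ℝ F p (vhat n a))
      = fun a => fderiv ℝ (lift n f) p (vhat n a) :=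
    funext fun a => (lift_affine_jet F p a).symm
  have eG : (fun a => fderiv ℝ G p (vhat n a))
      = fun a => fderiv ℝ (lift n g) p (vhat n a) :=
    funext fun a => (lift_affine_jet G p a).symm
  have eH : (fun a => fderiv ℝ H p (vhat n a))
      = fun a => fderiv ℝ (lift n h) p (vhat n a) :=
    funext fun a => (lift_affine_jet H p a).symm
  rw [eF, eG, eH]
  rw [← br_jacobi hπ hanti (contDiff_lift hfc) (contDiff_lift hgc) (contDiff_lift hhc) p]
  simp only [← homBracket_eq_br n Λ X]
  rw [hom_lift Λ X hgc hhc, hom_lift Λ X hhc hfc, hom_lift Λ X hfc hgc,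
    hom_lift Λ X hfc (contDiff_jacobiBracket hΛ hX hgc hhc),
    hom_lift Λ X hgc (contDiff_jacobiBracket hΛ hX hhc hfc),
    hom_lift Λ X hhc (contDiff_jacobiBracket hΛ hX hfc hgc)]
  have hj := hjacobi f g h hfc hgc hhc p.1
  simp only [lift]
  linear_combination Real.exp p.2 * hj
end

section
/- Let E be a real normed vector space, U ⊆ E an open set, and F a linear subspace of the continuous dual E →L[ℝ] ℝ. Let 𝔄(U) be the set of smooth functions f : E → ℝ (smooth on U) such that for every integer k ≥ 1, every x ∈ U, and all u₂, …, u_k ∈ E, the continuous linear functional u ↦ d^k f(x)(u, u₂, …, u_k) (the k-th iterated Fréchet derivative of f at x with the last k−1 slots fixed) belongs to F. Then 𝔄(U) is a subalgebra of the algebra of smooth functions on U: it contains the constant functions and is closed under addition, multiplication by real scalars, and pointwise multiplication. -/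
open Set
section Aux
variable {E : Type*} [NormedAddCommGroup E] [NormedSpace ℝ E] {U : Set E}
  {F : Submodule ℝ (E →L[ℝ] ℝ)} {f g : E → ℝ}

private lemma diffD (hU : UniqueDiffOn ℝ U) (hf : ContDiffOn ℝ (⊤ : ℕ∞) f U) (k : ℕ) :
    DifferentiableOn ℝ (iteratedFDerivWithin ℝ k f U) U :=
  hf.differentiableOn_iteratedFDerivWithin (by exact_mod_cast ENat.coe_lt_top k) hU

private lemma bridge (hU : UniqueDiffOn ℝ U) (hf : ContDiffOn ℝ (⊤ : ℕ∞) f U) {x : E} (hx : x ∈ U)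
    (k : ℕ) (v : Fin k → E) :
    (iteratedFDerivWithin ℝ (k + 1) f U x).toContinuousLinearMap (Fin.cons 0 v) 0 =
      fderivWithin ℝ (fun y => iteratedFDerivWithin ℝ k f U y v) U x := by
  ext u
  have h1 : (iteratedFDerivWithin ℝ (k + 1) f U x).toContinuousLinearMap (Fin.cons 0 v) 0 u
      = iteratedFDerivWithin ℝ (k + 1) f U x (Fin.cons u v) := by
    simp [ContinuousMultilinearMap.toContinuousLinearMap, Fin.update_cons_zero]
  rw [h1, iteratedFDerivWithin_succ_apply_left,
    fderivWithin_continuousMultilinear_apply_const_apply (hU x hx) (diffD hU hf k x hx) v u]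
  simp

private def gen (U : Set E) (f g : E → ℝ) : Set (E → ℝ) :=
  {h | ∃ (i j : ℕ) (w : Fin i → E) (w' : Fin j → E),
    h = fun y => iteratedFDerivWithin ℝ i f U y w * iteratedFDerivWithin ℝ j g U y w'}

private lemma spanDiffOn (hU : UniqueDiffOn ℝ U) (hf : ContDiffOn ℝ (⊤ : ℕ∞) f U)
    (hg : ContDiffOn ℝ (⊤ : ℕ∞) g U) {h : E → ℝ} (hh : h ∈ Submodule.span ℝ (gen U f g)) :
    DifferentiableOn ℝ h U := by
  induction hh using Submodule.span_induction with
  | mem h hh =>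
    obtain ⟨i, j, w, w', rfl⟩ := hh
    exact ((diffD hU hf i).continuousMultilinear_apply_const w).mul
      ((diffD hU hg j).continuousMultilinear_apply_const w')
  | zero => exact differentiableOn_const 0
  | add a b _ _ ha hb => exact ha.add hb
  | smul c a _ ha => exact ha.const_smul c

private lemma spanDeriv (hU : UniqueDiffOn ℝ U) (hf : ContDiffOn ℝ (⊤ : ℕ∞) f U)
    (hg : ContDiffOn ℝ (⊤ : ℕ∞) g U) (u : E) {h : E → ℝ}
    (hh : h ∈ Submodule.span ℝ (gen U f g)) :
    ∃ h' ∈ Submodule.span ℝ (gen U f g), ∀ y ∈ U, fderivWithin ℝ h U y u = h' y := by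
  induction hh using Submodule.span_induction with
  | mem h hh =>
    obtain ⟨i, j, w, w', rfl⟩ := hh
    refine ⟨_, Submodule.add_mem _ (Submodule.subset_span ⟨i, j + 1, w, Fin.cons u w', rfl⟩)
      (Submodule.subset_span ⟨i + 1, j, Fin.cons u w, w', rfl⟩), fun y hy => ?_⟩
    have hφ : DifferentiableWithinAt ℝ (fun z => iteratedFDerivWithin ℝ i f U z w) U y :=
      ((diffD hU hf i).continuousMultilinear_apply_const w) y hy
    have hψ : DifferentiableWithinAt ℝ (fun z => iteratedFDerivWithin ℝ j g U z w') U y :=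
      ((diffD hU hg j).continuousMultilinear_apply_const w') y hy
    have e1 : iteratedFDerivWithin ℝ (j + 1) g U y (Fin.cons u w') =
        fderivWithin ℝ (fun z => iteratedFDerivWithin ℝ j g U z w') U y u := by
      rw [iteratedFDerivWithin_succ_apply_left,
        fderivWithin_continuousMultilinear_apply_const_apply (hU y hy) (diffD hU hg j y hy) w' u]
      simp
    have e2 : iteratedFDerivWithin ℝ (i + 1) f U y (Fin.cons u w) =
        fderivWithin ℝ (fun z => iteratedFDerivWithin ℝ i f U z w) U y u := by
      rw [iteratedFDerivWithin_succ_apply_left,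
        fderivWithin_continuousMultilinear_apply_const_apply (hU y hy) (diffD hU hf i y hy) w u]
      simp
    rw [fderivWithin_fun_mul (hU y hy) hφ hψ]
    simp only [Pi.add_apply, ContinuousLinearMap.add_apply, ContinuousLinearMap.smul_apply,
      smul_eq_mul, e1, e2]
    ring
  | zero =>
    refine ⟨0, Submodule.zero_mem _, fun y hy => ?_⟩
    rw [show (0 : E → ℝ) = fun _ => (0 : ℝ) from rfl, fderivWithin_const_apply _]
    simp
  | add a b ha' hb' ha hb =>
    obtain ⟨a', has, hva⟩ := ha
    obtain ⟨b', hbs, hvb⟩ := hb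
    refine ⟨a' + b', Submodule.add_mem _ has hbs, fun y hy => ?_⟩
    rw [fderivWithin_add (hU y hy) (spanDiffOn hU hf hg ha' y hy)
      (spanDiffOn hU hf hg hb' y hy)]
    simp [hva y hy, hvb y hy]
  | smul c a ha' ha =>
    obtain ⟨a', has, hva⟩ := ha
    refine ⟨c • a', Submodule.smul_mem _ _ has, fun y hy => ?_⟩
    rw [fderivWithin_const_smul (hU y hy) (spanDiffOn hU hf hg ha' y hy)]
    simp [hva y hy]

private lemma spanMemF (hU : UniqueDiffOn ℝ U)
    (hf : ContDiffOn ℝ (⊤ : ℕ∞) f U) (hg : ContDiffOn ℝ (⊤ : ℕ∞) g U)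
    (hf2 : ∀ (k : ℕ) (x : E), x ∈ U → ∀ v : Fin k → E,
      (iteratedFDerivWithin ℝ (k + 1) f U x).toContinuousLinearMap (Fin.cons 0 v) 0 ∈ F)
    (hg2 : ∀ (k : ℕ) (x : E), x ∈ U → ∀ v : Fin k → E,
      (iteratedFDerivWithin ℝ (k + 1) g U x).toContinuousLinearMap (Fin.cons 0 v) 0 ∈ F)
    {h : E → ℝ} (hh : h ∈ Submodule.span ℝ (gen U f g)) :
    ∀ x ∈ U, fderivWithin ℝ h U x ∈ F := by
  induction hh using Submodule.span_induction with
  | mem h hh =>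
    obtain ⟨i, j, w, w', rfl⟩ := hh
    intro x hx
    have hφ : DifferentiableWithinAt ℝ (fun z => iteratedFDerivWithin ℝ i f U z w) U x :=
      ((diffD hU hf i).continuousMultilinear_apply_const w) x hx
    have hψ : DifferentiableWithinAt ℝ (fun z => iteratedFDerivWithin ℝ j g U z w') U x :=
      ((diffD hU hg j).continuousMultilinear_apply_const w') x hx
    rw [fderivWithin_fun_mul (hU x hx) hφ hψ]
    refine F.add_mem (F.smul_mem _ ?_) (F.smul_mem _ ?_)
    · rw [← bridge hU hg hx j w']; exact hg2 j x hx w'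
    · rw [← bridge hU hf hx i w]; exact hf2 i x hx w
  | zero =>
    intro x hx
    rw [show (0 : E → ℝ) = fun _ => (0 : ℝ) from rfl, fderivWithin_const_apply _]
    exact F.zero_mem
  | add a b ha' hb' ha hb =>
    intro x hx
    rw [fderivWithin_add (hU x hx) (spanDiffOn hU hf hg ha' x hx)
      (spanDiffOn hU hf hg hb' x hx)]
    exact F.add_mem (ha x hx) (hb x hx)
  | smul c a ha' ha =>
    intro x hx
    rw [fderivWithin_const_smul (hU x hx) (spanDiffOn hU hf hg ha' x hx)]
    exact F.smul_mem _ (ha x hx)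

private lemma keyRepr (hU : UniqueDiffOn ℝ U) (hf : ContDiffOn ℝ (⊤ : ℕ∞) f U)
    (hg : ContDiffOn ℝ (⊤ : ℕ∞) g U) (k : ℕ) :
    ∀ v : Fin k → E, ∃ h ∈ Submodule.span ℝ (gen U f g),
      ∀ y ∈ U, iteratedFDerivWithin ℝ k (fun y => f y * g y) U y v = h y := by
  induction k with
  | zero =>
    intro v
    refine ⟨_, Submodule.subset_span ⟨0, 0, v, v, rfl⟩, fun y hy => ?_⟩
    simp
  | succ k ih =>
    intro v
    obtain ⟨h, hh, hval⟩ := ih (Fin.tail v)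
    obtain ⟨h', hh', hval'⟩ := spanDeriv hU hf hg (v 0) hh
    refine ⟨h', hh', fun y hy => ?_⟩
    rw [iteratedFDerivWithin_succ_apply_left,
      ← fderivWithin_continuousMultilinear_apply_const_apply (hU y hy)
        (diffD hU (hf.mul hg) k y hy) (Fin.tail v) (v 0),
      fderivWithin_congr' (fun z hz => hval z hz) hy, hval' y hy]

end Aux

/-- The algebra `𝔄(U)` attached to a subspace `F` of the continuous dual of `E` (the
linear model of a weak subbundle of the cotangent bundle): smooth functions on the open
set `U` all of whose higher differentials, with all but the first slot fixed, give
continuous linear functionals belonging to `F`. -/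
def memA {E : Type*} [NormedAddCommGroup E] [NormedSpace ℝ E]
    (F : Submodule ℝ (E →L[ℝ] ℝ)) (U : Set E) (f : E → ℝ) : Prop :=
  ContDiffOn ℝ (⊤ : ℕ∞) f U ∧
    ∀ (k : ℕ) (x : E), x ∈ U → ∀ v : Fin k → E,
      (iteratedFDerivWithin ℝ (k + 1) f U x).toContinuousLinearMap
        (Fin.cons 0 v) 0 ∈ F

/-- `𝔄(U)` is a subalgebra of the smooth functions on `U`: it contains the constants and
is closed under addition, real scalar multiplication, and pointwise multiplication. -/
theorem memA_subalgebra {E : Type*} [NormedAddCommGroup E] [NormedSpace ℝ E]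
    (U : Set E) (hU : IsOpen U) (F : Submodule ℝ (E →L[ℝ] ℝ)) :
    (∀ c : ℝ, memA F U (fun _ => c)) ∧
    (∀ f g : E → ℝ, memA F U f → memA F U g → memA F U (fun x => f x + g x)) ∧
    (∀ (c : ℝ) (f : E → ℝ), memA F U f → memA F U (fun x => c * f x)) ∧
    (∀ f g : E → ℝ, memA F U f → memA F U g → memA F U (fun x => f x * g x)) := by
  have hUd : UniqueDiffOn ℝ U := hU.uniqueDiffOn
  refine ⟨?_, ?_, ?_, ?_⟩
  · intro c
    refine ⟨contDiffOn_const, fun k x hx v => ?_⟩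
    rw [iteratedFDerivWithin_const_of_ne (Nat.succ_ne_zero k) c U]
    convert F.zero_mem
    ext u; simp [ContinuousMultilinearMap.toContinuousLinearMap]
  · intro f g hf hg
    refine ⟨hf.1.add hg.1, fun k x hx v => ?_⟩
    rw [iteratedFDerivWithin_add_apply' ((hf.1.of_le (by exact_mod_cast le_top)) x hx) ((hg.1.of_le (by exact_mod_cast le_top)) x hx) hUd hx]
    convert F.add_mem (hf.2 k x hx v) (hg.2 k x hx v)
    ext u; simp [ContinuousMultilinearMap.toContinuousLinearMap]
  · intro c f hf
    have hcf : (fun x => c * f x) = c • f := rfl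
    refine ⟨by rw [hcf]; exact hf.1.const_smul c, fun k x hx v => ?_⟩
    rw [hcf, iteratedFDerivWithin_const_smul_apply ((hf.1.of_le (by exact_mod_cast le_top)) x hx) hUd hx]
    convert F.smul_mem c (hf.2 k x hx v)
    ext u; simp [ContinuousMultilinearMap.toContinuousLinearMap]
  · intro f g hf hg
    refine ⟨hf.1.mul hg.1, fun k x hx v => ?_⟩
    rw [bridge hUd (hf.1.mul hg.1) hx k v]
    obtain ⟨h, hh, hval⟩ := keyRepr hUd hf.1 hg.1 k v
    rw [fderivWithin_congr' (fun z hz => hval z hz) hx]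
    exact spanMemF hUd hf.1 hg.1 hf.2 hg.2 hh x hx
end

section
/- Let Λ : ℝⁿ → Matrix (Fin n) (Fin n) ℝ be a smooth map with Λ(x) antisymmetric for every x, let X : ℝⁿ → ℝⁿ be smooth, and let φ : ℝⁿ → ℝ be a smooth nowhere-vanishing function. Define the conformally transformed data Λ_φ(x) = φ(x)·Λ(x) and X_φ(x)ⱼ = φ(x) X(x)ⱼ + Σᵢ Λ(x)_{ij} ∂ᵢφ(x). Then the Jacobi bracket {.,.}_φ associated with (Λ_φ, X_φ) satisfies, for all smooth f, g : ℝⁿ → ℝ and all x, the conformal identity {f,g}_φ(x) = (1/φ(x)) · {φ·f, φ·g}(x), where {.,.} is the Jacobi bracket associated with (Λ, X). -/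
open scoped Matrix

/-- Conformal transformation of a Jacobi structure: with `Λ_φ = φ·Λ` and
`(X_φ)ⱼ = φ Xⱼ + Σᵢ Λ_{ij} ∂ᵢφ`, the associated bracket satisfies
`{f,g}_φ = (1/φ)·{φf, φg}`. -/
theorem conformal_jacobi_bracket (n : ℕ)
    (Λ : (Fin n → ℝ) → Matrix (Fin n) (Fin n) ℝ) (X : (Fin n → ℝ) → Fin n → ℝ)
    (hΛ : ∀ i j, ContDiff ℝ (⊤ : ℕ∞) (fun x => Λ x i j))
    (hΛanti : ∀ x, (Λ x)ᵀ = - Λ x)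
    (hX : ContDiff ℝ (⊤ : ℕ∞) X)
    (φ : (Fin n → ℝ) → ℝ) (hφ : ContDiff ℝ (⊤ : ℕ∞) φ) (hφ0 : ∀ x, φ x ≠ 0)
    (Λφ : (Fin n → ℝ) → Matrix (Fin n) (Fin n) ℝ)
    (hΛφ : ∀ x i j, Λφ x i j = φ x * Λ x i j)
    (Xφ : (Fin n → ℝ) → Fin n → ℝ)
    (hXφ : ∀ x j, Xφ x j = φ x * X x j + ∑ i : Fin n, Λ x i j * pd φ i x)
    (f g : (Fin n → ℝ) → ℝ) (hf : ContDiff ℝ (⊤ : ℕ∞) f) (hg : ContDiff ℝ (⊤ : ℕ∞) g) :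
    ∀ x, jacobiBracket n Λφ Xφ f g x
      = (1 / φ x) *
          jacobiBracket n Λ X (fun y => φ y * f y) (fun y => φ y * g y) x := by
  intro x
  have pdmul : ∀ (u v : (Fin n → ℝ) → ℝ), ContDiff ℝ (⊤ : ℕ∞) u → ContDiff ℝ (⊤ : ℕ∞) v →
      ∀ i, pd (fun y => u y * v y) i x = u x * pd v i x + v x * pd u i x := by
    intro u v hu hv i
    unfold pd
    rw [fderiv_fun_mul (hu.differentiable (by simp) x) (hv.differentiable (by simp) x)]
    simp
  have hA : ∀ i j, Λ x j i = - Λ x i j := by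
    intro i j
    have := congrFun (congrFun (hΛanti x) i) j
    simpa [Matrix.transpose_apply, Matrix.neg_apply] using this
  have anti_pair : ∀ (u v : Fin n → ℝ),
      ∑ i, ∑ j, Λ x i j * u i * v j = - ∑ i, ∑ j, Λ x i j * v i * u j := by
    intro u v
    rw [Finset.sum_comm]
    have h : ∀ j ∈ Finset.univ, ∀ i ∈ Finset.univ,
        Λ x i j * u i * v j = -(Λ x j i * v j * u i) := by
      intro j _ i _
      rw [hA j i]; ring
    calc ∑ j, ∑ i, Λ x i j * u i * v j
        = ∑ j, ∑ i, -(Λ x j i * v j * u i) := by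
          exact Finset.sum_congr rfl fun j hj => Finset.sum_congr rfl (h j hj)
      _ = - ∑ j, ∑ i, Λ x j i * v j * u i := by
          simp [Finset.sum_neg_distrib]
  set a := φ x with ha
  set fx := f x with hfx
  set gx := g x with hgx
  set F := fun i => pd f i x with hF
  set G := fun i => pd g i x with hG
  set P := fun i => pd φ i x with hP
  set Xv := fun j => X x j with hXv
  have hpdf : ∀ i, pd (fun y => φ y * f y) i x = a * F i + fx * P i := fun i => pdmul φ f hφ hf i
  have hpdg : ∀ i, pd (fun y => φ y * g y) i x = a * G i + gx * P i := fun i => pdmul φ g hφ hg i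
  have hD : ∑ i, ∑ j, Λ x i j * P i * P j = 0 := by
    have := anti_pair P P
    linarith
  have hC : ∑ i, ∑ j, Λ x i j * F i * P j = - ∑ i, ∑ j, Λ x i j * P i * F j :=
    anti_pair F P
  -- abbreviations for the basic sums
  set A := ∑ i, ∑ j, Λ x i j * F i * G j with hAd
  set B := ∑ i, ∑ j, Λ x i j * P i * G j with hBd
  set C := ∑ i, ∑ j, Λ x i j * P i * F j with hCd
  set XF := ∑ j, Xv j * F j with hXF
  set XG := ∑ j, Xv j * G j with hXG
  set XP := ∑ j, Xv j * P j with hXP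
  have hL1 : ∑ i, ∑ j, Λφ x i j * pd f i x * pd g j x = a * A := by
    rw [hAd, Finset.mul_sum]
    refine Finset.sum_congr rfl fun i _ => ?_
    rw [Finset.mul_sum]
    exact Finset.sum_congr rfl fun j _ => by rw [hΛφ]; ring
  have hL2 : ∑ j, Xφ x j * pd g j x = a * XG + B := by
    rw [hBd, Finset.sum_comm]
    rw [hXG, Finset.mul_sum, ← Finset.sum_add_distrib]
    refine Finset.sum_congr rfl fun j _ => ?_
    rw [hXφ, add_mul, Finset.sum_mul]
    congr 1
    exact mul_assoc _ _ _
  have hL3 : ∑ j, Xφ x j * pd f j x = a * XF + C := by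
    rw [hCd, Finset.sum_comm]
    rw [hXF, Finset.mul_sum, ← Finset.sum_add_distrib]
    refine Finset.sum_congr rfl fun j _ => ?_
    rw [hXφ, add_mul, Finset.sum_mul]
    congr 1
    exact mul_assoc _ _ _
  have hR1 : ∑ i, ∑ j, Λ x i j * pd (fun y => φ y * f y) i x * pd (fun y => φ y * g y) j x
      = a * a * A + a * fx * B - a * gx * C := by
    have expand : ∀ i j, Λ x i j * (a * F i + fx * P i) * (a * G j + gx * P j)
        = a * a * (Λ x i j * F i * G j) + a * gx * (Λ x i j * F i * P j)
          + a * fx * (Λ x i j * P i * G j) + fx * gx * (Λ x i j * P i * P j) := by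
      intro i j; ring
    calc ∑ i, ∑ j, Λ x i j * pd (fun y => φ y * f y) i x * pd (fun y => φ y * g y) j x
        = ∑ i, ∑ j, (a * a * (Λ x i j * F i * G j) + a * gx * (Λ x i j * F i * P j)
            + a * fx * (Λ x i j * P i * G j) + fx * gx * (Λ x i j * P i * P j)) := by
          refine Finset.sum_congr rfl fun i _ => Finset.sum_congr rfl fun j _ => ?_
          rw [hpdf, hpdg]; exact expand i j
      _ = a * a * A + a * gx * (∑ i, ∑ j, Λ x i j * F i * P j)
            + a * fx * B + fx * gx * (∑ i, ∑ j, Λ x i j * P i * P j) := by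
          simp only [Finset.sum_add_distrib, Finset.mul_sum, hAd, hBd]
      _ = a * a * A + a * fx * B - a * gx * C := by
          rw [hC, hD]; ring
  have hR2 : ∑ j, X x j * pd (fun y => φ y * g y) j x = a * XG + gx * XP := by
    rw [hXG, hXP, Finset.mul_sum, Finset.mul_sum, ← Finset.sum_add_distrib]
    exact Finset.sum_congr rfl fun j _ => by rw [hpdg]; ring
  have hR3 : ∑ j, X x j * pd (fun y => φ y * f y) j x = a * XF + fx * XP := by
    rw [hXF, hXP, Finset.mul_sum, Finset.mul_sum, ← Finset.sum_add_distrib]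
    exact Finset.sum_congr rfl fun j _ => by rw [hpdf]; ring
  show (∑ i, ∑ j, Λφ x i j * pd f i x * pd g j x)
      + fx * (∑ j, Xφ x j * pd g j x) - gx * (∑ j, Xφ x j * pd f j x)
    = (1 / a) * ((∑ i, ∑ j, Λ x i j * pd (fun y => φ y * f y) i x * pd (fun y => φ y * g y) j x)
      + (a * fx) * (∑ j, X x j * pd (fun y => φ y * g y) j x)
      - (a * gx) * (∑ j, X x j * pd (fun y => φ y * f y) j x))
  rw [hL1, hL2, hL3, hR1, hR2, hR3]
  have ha0 : a ≠ 0 := hφ0 x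
  field_simp
  ring
end

section
/- Let A be a commutative ℝ-algebra. For all alternating multiderivations D (k-alternating), D' (k'-alternating), and D'' (k''-alternating) of A, the generalized Jacobi identity holds: (−1)^{(k−1)(k''−1)} [[D,D'],D''] + (−1)^{(k'−1)(k−1)} [[D',D''],D] + (−1)^{(k''−1)(k'−1)} [[D'',D],D'] = 0, where [.,.] is the graded bracket defined from the shuffle composition. -/
/-!
Indexing shuffles by their first blocks, a shuffle having sign `(-1)` to the number of inversions
between its block and the complement, `D ∘ D'` becomes the insertion of `D'` into the first slot
of `D`. In `(D ∘ D') ∘ D''` the output of `D''` lands either in the first slot of `D'`, and these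
terms add up to `D ∘ (D' ∘ D'')`, or in a slot of `D`. In the remaining terms `D'` and `D''` sit
side by side in `D`, so they are graded symmetric in `D'` and `D''` because `D` is alternating.
Thus the associator is graded symmetric in its last two arguments (the composition is graded
pre-Lie), and the Jacobi identity for the graded commutator follows formally.
-/

/-- `D : (ℕ → A) → A` is a `k`-alternating derivation of the commutative ℝ-algebra `A`:
it depends only on the first `k` arguments, is ℝ-multilinear and alternating in them,
and satisfies the Leibniz rule in each argument. -/
structure IsAltDeriv {A : Type*} [CommRing A] [Algebra ℝ A]
    (k : ℕ) (D : (ℕ → A) → A) : Prop where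
  depends : ∀ f g : ℕ → A, (∀ i < k, f i = g i) → D f = D g
  map_add : ∀ i < k, ∀ (f : ℕ → A) (a b : A),
    D (Function.update f i (a + b))
      = D (Function.update f i a) + D (Function.update f i b)
  map_smul : ∀ i < k, ∀ (f : ℕ → A) (c : ℝ) (a : A),
    D (Function.update f i (c • a)) = c • D (Function.update f i a)
  alternating : ∀ i j, i < k → j < k → i ≠ j → ∀ f : ℕ → A, f i = f j → D f = 0
  leibniz : ∀ i < k, ∀ (f : ℕ → A) (a b : A),
    D (Function.update f i (a * b))
      = a * D (Function.update f i b) + D (Function.update f i a) * b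

/-- `σ` is increasing on the first `c` positions and on the remaining positions. -/
def IsShuffle {N : ℕ} (c : ℕ) (σ : Equiv.Perm (Fin N)) : Prop :=
  (∀ i j : Fin N, i < j → j.val < c → σ i < σ j) ∧
  (∀ i j : Fin N, i < j → c ≤ i.val → σ i < σ j)

instance {N : ℕ} (c : ℕ) (σ : Equiv.Perm (Fin N)) : Decidable (IsShuffle c σ) :=
  inferInstanceAs (Decidable ((∀ i j : Fin N, i < j → j.val < c → σ i < σ j) ∧
    (∀ i j : Fin N, i < j → c ≤ i.val → σ i < σ j)))

/-- The shuffle composition `D ∘ D'` of a `k`-alternating derivation with a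
`k'`-alternating derivation:
`(D∘D')(f₁,…,f_{k+k'−1}) = Σ_σ (−1)^{sign σ} D(D'(f_{σ(1)},…,f_{σ(k')}),
f_{σ(k'+1)},…,f_{σ(k+k'−1)})`, the sum over permutations `σ` of `{1,…,k+k'−1}` with
`σ(1) < … < σ(k')` and `σ(k'+1) < … < σ(k+k'−1)`. -/
noncomputable def altComp {A : Type*} [CommRing A] [Algebra ℝ A]
    (k k' : ℕ) (D D' : (ℕ → A) → A) : (ℕ → A) → A :=
  fun f => ∑ σ : Equiv.Perm (Fin (k + k' - 1)),
    if IsShuffle k' σ then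
      (Equiv.Perm.sign σ : ℤ) •
        D (fun t =>
          if t = 0 then
            D' (fun m => if h : m < k' ∧ m < k + k' - 1 then f (σ ⟨m, h.2⟩) else 0)
          else if h : t < k ∧ k' + t - 1 < k + k' - 1 then f (σ ⟨k' + t - 1, h.2⟩) else 0)
    else 0

/-- The graded bracket `[D,D'] = D∘D' − (−1)^{(k−1)(k'−1)} D'∘D`. -/
noncomputable def altBracket {A : Type*} [CommRing A] [Algebra ℝ A]
    (k k' : ℕ) (D D' : (ℕ → A) → A) : (ℕ → A) → A :=
  fun f => altComp k k' D D' f - ((-1 : ℤ) ^ ((k - 1) * (k' - 1))) • altComp k' k D' D f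

open Finset

namespace AltDeriv

/-- The `i`-th smallest element of `S`, with junk value `0` once `#S ≤ i`. -/
def nth (S : Finset ℕ) (i : ℕ) : ℕ := (S.sort (· ≤ ·)).getD i 0

def rank (S : Finset ℕ) (x : ℕ) : ℕ := #{y ∈ S | y < x}

section Enumeration

variable {S : Finset ℕ} {i j x : ℕ}

lemma nth_eq_getElem (h : i < #S) :
    nth S i = (S.sort (· ≤ ·))[i]'(by rwa [length_sort]) := by
  rw [nth, List.getD_eq_getElem]

lemma nth_mem (h : i < #S) : nth S i ∈ S := by
  rw [nth_eq_getElem h, ← mem_sort (· ≤ ·)]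
  exact List.getElem_mem _

lemma nth_strictMonoOn : StrictMonoOn (nth S) (Set.Iio #S) := by
  intro i hi j hj hij
  rw [nth_eq_getElem hi, nth_eq_getElem hj]
  exact (sortedLT_sort S).strictMono_get (show (⟨i, _⟩ : Fin _) < ⟨j, _⟩ from hij)

lemma nth_lt_nth (hij : i < j) (hj : j < #S) : nth S i < nth S j :=
  nth_strictMonoOn (hij.trans hj) hj hij

lemma rank_lt_card (hx : x ∈ S) : rank S x < #S :=
  card_lt_card (filter_ssubset.2 ⟨x, hx, lt_irrefl x⟩)

lemma rank_strictMonoOn : StrictMonoOn (rank S) S := by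
  intro x hx y _ hxy
  refine card_lt_card ⟨fun z hz => ?_, fun h => ?_⟩
  · rw [mem_filter] at hz ⊢
    exact ⟨hz.1, hz.2.trans hxy⟩
  · simpa using h (mem_filter.2 ⟨hx, hxy⟩)

lemma rank_nth (h : i < #S) : rank S (nth S i) = i := by
  have : {y ∈ S | y < nth S i} = (range i).image (nth S) := by
    ext y
    simp only [mem_filter, mem_image, mem_range]
    constructor
    · rintro ⟨hy, hlt⟩
      rw [← mem_sort (· ≤ ·), List.mem_iff_getElem] at hy
      obtain ⟨j, hj, rfl⟩ := hy
      rw [length_sort] at hj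
      rw [← nth_eq_getElem hj] at hlt ⊢
      exact ⟨j, nth_strictMonoOn.lt_iff_lt hj h |>.1 hlt, rfl⟩
    · rintro ⟨j, hj, rfl⟩
      exact ⟨nth_mem (hj.trans h), nth_lt_nth hj h⟩
  rw [rank, this, card_image_of_injOn, card_range]
  exact nth_strictMonoOn.injOn.mono fun j hj => (mem_range.1 hj).trans h

lemma nth_rank (hx : x ∈ S) : nth S (rank S x) = x := by
  rw [← mem_sort (· ≤ ·), List.mem_iff_getElem] at hx
  obtain ⟨i, hi, rfl⟩ := hx
  rw [length_sort] at hi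
  rw [← nth_eq_getElem hi, rank_nth hi]

lemma image_nth_range : (range #S).image (nth S) = S := by
  ext x
  refine ⟨fun hx => ?_, fun hx => mem_image.2 ⟨rank S x, mem_range.2 (rank_lt_card hx), ?_⟩⟩
  · obtain ⟨i, hi, rfl⟩ := mem_image.1 hx
    exact nth_mem (mem_range.1 hi)
  · exact nth_rank hx

lemma nth_image {g : ℕ → ℕ} (hg : StrictMonoOn g S) (hi : i < #S) :
    nth (S.image g) i = g (nth S i) := by
  have hsort : (S.image g).sort (· ≤ ·) = (S.sort (· ≤ ·)).map g := by
    refine List.Perm.eq_of_pairwise' (pairwise_sort _ _) ?_ ?_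
    · rw [List.pairwise_map]
      refine (sortedLT_sort S).pairwise.imp_of_mem fun ha hb hab => (hg ?_ ?_ hab).le
      · exact (mem_sort _).1 ha
      · exact (mem_sort _).1 hb
    · refine List.perm_of_nodup_nodup_toFinset_eq (sort_nodup _ _) ?_ (by ext; simp)
      exact (sort_nodup _ _).map_on fun a ha b hb =>
        hg.injOn ((mem_sort _).1 ha) ((mem_sort _).1 hb)
  rw [nth, nth, hsort, List.getD_eq_getElem _ _ (by simpa using hi),
    List.getD_eq_getElem _ _ (by simpa using hi)]
  simp

lemma nth_range {n : ℕ} (hi : i < n) : nth (range n) i = i := by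
  rw [nth, sort_range, List.getD_eq_getElem _ _ (by simpa using hi)]
  simp

lemma image_rank_image_nth {V : Finset ℕ} (hV : V ⊆ range #S) :
    (V.image (nth S)).image (rank S) = V := by
  rw [image_image]
  conv_rhs => rw [← image_id (s := V)]
  exact image_congr fun i hi => rank_nth (mem_range.1 (hV hi))

lemma image_nth_image_rank {B : Finset ℕ} (hB : B ⊆ S) : (B.image (rank S)).image (nth S) = B := by
  rw [image_image]
  conv_rhs => rw [← image_id (s := B)]
  exact image_congr fun x hx => nth_rank (hB hx)

lemma image_nth_sdiff {V : Finset ℕ} (hV : V ⊆ range #S) :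
    (range #S \ V).image (nth S) = S \ V.image (nth S) := by
  rw [image_sdiff_of_injOn _ hV, image_nth_range]
  rw [coe_range]
  exact nth_strictMonoOn.injOn

lemma sum_powersetCard_image_nth {M : Type*} [AddCommMonoid M] (k : ℕ) (F : Finset ℕ → M) :
    ∑ V ∈ (range #S).powersetCard k, F (V.image (nth S)) = ∑ B ∈ S.powersetCard k, F B := by
  refine sum_nbij' (image (nth S)) (image (rank S)) (fun V hV => ?_) (fun B hB => ?_)
    (fun V hV => image_rank_image_nth (mem_powersetCard.1 hV).1)
    (fun B hB => image_nth_image_rank (mem_powersetCard.1 hB).1) (fun _ _ => rfl)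
  · obtain ⟨hsub, rfl⟩ := mem_powersetCard.1 hV
    refine mem_powersetCard.2 ⟨fun x hx => ?_, card_image_of_injOn ?_⟩
    · obtain ⟨i, hi, rfl⟩ := mem_image.1 hx
      exact nth_mem (mem_range.1 (hsub hi))
    · exact nth_strictMonoOn.injOn.mono fun i hi => mem_range.1 (hsub hi)
  · obtain ⟨hsub, rfl⟩ := mem_powersetCard.1 hB
    refine mem_powersetCard.2 ⟨fun i hi => ?_, card_image_of_injOn ?_⟩
    · obtain ⟨x, hx, rfl⟩ := mem_image.1 hi
      exact mem_range.2 (rank_lt_card (hsub hx))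
    · exact rank_strictMonoOn.injOn.mono hsub

end Enumeration

def invCount (P Q : Finset ℕ) : ℕ := ∑ p ∈ P, #{q ∈ Q | q < p}

/-- The sign of the shuffle of `X` listing first the elements of `S`, then those of `X \ S`,
both increasingly. -/
def shuffleSign (X S : Finset ℕ) : ℤ := (-1) ^ invCount S (X \ S)

section ShuffleSign

variable {P Q R X S T B V : Finset ℕ}

lemma invCount_union_left (h : Disjoint P Q) :
    invCount (P ∪ Q) R = invCount P R + invCount Q R :=
  sum_union h

lemma invCount_union_right (h : Disjoint Q R) :
    invCount P (Q ∪ R) = invCount P Q + invCount P R := by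
  rw [invCount, invCount, invCount, ← sum_add_distrib]
  refine sum_congr rfl fun p _ => ?_
  rw [filter_union, card_union_of_disjoint (disjoint_filter_filter h)]

lemma invCount_add_invCount (h : Disjoint P Q) : invCount P Q + invCount Q P = #P * #Q := by
  have hswap : invCount Q P = ∑ p ∈ P, #{q ∈ Q | p < q} := by
    simp only [invCount, card_filter]
    exact sum_comm
  rw [invCount, hswap, ← sum_add_distrib, sum_const_nat]
  intro p hp
  rw [← card_filter_add_card_filter_not (s := Q) (fun q => q < p)]
  congr 2
  refine filter_congr fun q hq => ?_
  have : q ≠ p := fun hqp => disjoint_left.1 h hp (hqp ▸ hq)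
  omega

lemma invCount_image {g : ℕ → ℕ} (hg : StrictMonoOn g ↑(P ∪ Q)) :
    invCount (P.image g) (Q.image g) = invCount P Q := by
  rw [invCount, sum_image (hg.injOn.mono (by simp))]
  refine sum_congr rfl fun p hp => ?_
  rw [filter_image, card_image_of_injOn (hg.injOn.mono fun q hq => by simp_all)]
  congr 1
  refine filter_congr fun q hq => ?_
  exact hg.lt_iff_lt (by simp [hq]) (by simp [hp])

lemma invCount_insert_zero_left (h : 0 ∉ P) : invCount (insert 0 P) Q = invCount P Q := by
  rw [invCount, sum_insert h]
  simp [invCount]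

lemma invCount_zero_right (h : 0 ∉ P) : invCount P {0} = #P := by
  rw [invCount, card_eq_sum_ones]
  refine sum_congr rfl fun p hp => ?_
  have : p ≠ 0 := fun hp0 => h (hp0 ▸ hp)
  rw [card_eq_one]
  exact ⟨0, by ext; simp; omega⟩

lemma shuffleSign_image {g : ℕ → ℕ} (hg : StrictMonoOn g X) (hS : S ⊆ X) :
    shuffleSign (X.image g) (S.image g) = shuffleSign X S := by
  rw [shuffleSign, shuffleSign, ← image_sdiff_of_injOn hg.injOn hS, invCount_image]
  exact hg.mono (by simp [hS])

lemma shuffleSign_mul_shuffleSign_sdiff (hB : B ⊆ X \ T) :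
    shuffleSign X T * shuffleSign (X \ T) B = shuffleSign X (T ∪ B) * shuffleSign (T ∪ B) T := by
  have hTB : Disjoint T B := disjoint_of_subset_right hB disjoint_sdiff
  have hC : X \ (T ∪ B) = (X \ T) \ B := by ext; simp; tauto
  have hT : invCount T (X \ T) = invCount T B + invCount T ((X \ T) \ B) := by
    conv_lhs => rw [← union_sdiff_of_subset hB]
    exact invCount_union_right disjoint_sdiff
  rw [shuffleSign, shuffleSign, shuffleSign, shuffleSign, ← pow_add, ← pow_add,
    union_sdiff_cancel_left hTB, hC, hT, invCount_union_left hTB]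
  congr 1
  omega

lemma shuffleSign_mul_shuffleSign_sdiff_comm (hT : T ⊆ X) (hB : B ⊆ X) (hTB : Disjoint T B) :
    shuffleSign X T * shuffleSign (X \ T) B
      = (-1) ^ (#T * #B) * (shuffleSign X B * shuffleSign (X \ B) T) := by
  have hBT : B ⊆ X \ T := subset_sdiff.2 ⟨hB, hTB.symm⟩
  have hXT : invCount T (X \ T) = invCount T B + invCount T ((X \ T) \ B) := by
    conv_lhs => rw [← union_sdiff_of_subset hBT]
    exact invCount_union_right disjoint_sdiff
  have hXB : invCount B (X \ B) = invCount B T + invCount B ((X \ T) \ B) := by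
    have : X \ B = T ∪ (X \ T) \ B := by ext; simp; grind
    rw [this]
    exact invCount_union_right (disjoint_of_subset_right sdiff_subset disjoint_sdiff)
  have hC : (X \ B) \ T = (X \ T) \ B := by ext; simp; tauto
  have hcard := invCount_add_invCount hTB
  rw [shuffleSign, shuffleSign, shuffleSign, shuffleSign, hC, ← pow_add, ← pow_add, ← pow_add,
    hXT, hXB]
  exact neg_one_pow_congr (by simp only [Nat.even_iff]; omega)

lemma range_add_one_sdiff_image (n : ℕ) (V : Finset ℕ) :
    range (n + 1) \ V.image (· + 1) = insert 0 ((range n \ V).image (· + 1)) := by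
  ext (_ | x) <;> simp

lemma range_add_one_sdiff_insert (n : ℕ) (V : Finset ℕ) :
    range (n + 1) \ insert 0 (V.image (· + 1)) = (range n \ V).image (· + 1) := by
  ext (_ | x) <;> simp

lemma strictMonoOn_add_one (s : Set ℕ) : StrictMonoOn (· + 1) s :=
  fun _ _ _ _ h => Nat.succ_lt_succ h

lemma shuffleSign_insert_zero (n : ℕ) (V : Finset ℕ) :
    shuffleSign (range (n + 1)) (insert 0 (V.image (· + 1))) = shuffleSign (range n) V := by
  rw [shuffleSign, shuffleSign, range_add_one_sdiff_insert, invCount_insert_zero_left (by simp),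
    invCount_image (strictMonoOn_add_one _)]

lemma shuffleSign_image_add_one (n : ℕ) (V : Finset ℕ) :
    shuffleSign (range (n + 1)) (V.image (· + 1)) = (-1) ^ #V * shuffleSign (range n) V := by
  rw [shuffleSign, shuffleSign, range_add_one_sdiff_image, insert_eq,
    invCount_union_right (by simp), invCount_zero_right (by simp),
    invCount_image (strictMonoOn_add_one _), card_image_of_injective _ (add_left_injective 1),
    pow_add]

lemma shuffleSign_image_nth (hV : V ⊆ range #S) :
    shuffleSign S (V.image (nth S)) = shuffleSign (range #S) V := by
  have h := shuffleSign_image (g := nth S) (by rw [coe_range]; exact nth_strictMonoOn) hV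
  rwa [image_nth_range] at h

end ShuffleSign

section Sequences

variable {A : Type*}

def cons (a : A) (g : ℕ → A) : ℕ → A := fun t => if t = 0 then a else g (t - 1)

@[simp] lemma cons_zero (a : A) (g : ℕ → A) : cons a g 0 = a := rfl

@[simp] lemma cons_succ (a : A) (g : ℕ → A) (t : ℕ) : cons a g (t + 1) = g t := rfl

lemma update_cons_zero (x z : A) (g : ℕ → A) : Function.update (cons x g) 0 z = cons z g := by
  funext t
  rcases t with _ | t <;> simp [cons]

lemma update_cons_one (x y z : A) (g : ℕ → A) :
    Function.update (cons x (cons y g)) 1 z = cons x (cons z g) := by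
  funext t
  rcases t with _ | _ | t <;> simp [cons]

/-- `f` read along `S` increasingly and padded with zeros, exactly as the arguments of the
derivations in `altComp` are. -/
def subseq [Zero A] (S : Finset ℕ) (f : ℕ → A) : ℕ → A :=
  fun m => if m < #S then f (nth S m) else 0

variable [Zero A] {S V : Finset ℕ}

lemma subseq_subseq (hV : V ⊆ range #S) (f : ℕ → A) :
    subseq V (subseq S f) = subseq (V.image (nth S)) f := by
  have hmono : StrictMonoOn (nth S) V := nth_strictMonoOn.mono fun i hi => mem_range.1 (hV hi)
  funext m
  unfold subseq
  rw [card_image_of_injOn hmono.injOn]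
  by_cases hm : m < #V
  · rw [if_pos hm, if_pos hm, if_pos (mem_range.1 (hV (nth_mem hm))), nth_image hmono hm]
  · rw [if_neg hm, if_neg hm]

lemma subseq_image_add_one_cons (y : A) (g : ℕ → A) :
    subseq (V.image (· + 1)) (cons y g) = subseq V g := by
  funext m
  simp only [subseq, card_image_of_injective _ (add_left_injective 1)]
  split_ifs with hm
  · rw [nth_image (strictMonoOn_add_one _) hm, cons_succ]
  · rfl

lemma nth_insert_zero_succ {m : ℕ} (h : 0 ∉ S) : nth (insert 0 S) (m + 1) = nth S m := by
  have : (insert 0 S).sort (· ≤ ·) = 0 :: S.sort (· ≤ ·) := by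
    refine List.Perm.eq_of_pairwise' (pairwise_sort _ _) ?_ ?_
    · exact List.pairwise_cons.2 ⟨fun b _ => b.zero_le, pairwise_sort _ _⟩
    · refine List.perm_of_nodup_nodup_toFinset_eq (sort_nodup _ _) ?_ (by ext; simp)
      exact List.nodup_cons.2 ⟨by simpa using h, sort_nodup _ _⟩
  rw [nth, nth, this, List.getD_cons_succ]

lemma nth_insert_zero_zero : nth (insert 0 S) 0 = 0 := by
  have h := nth_rank (mem_insert_self 0 S)
  rwa [show rank (insert 0 S) 0 = 0 by simp [rank]] at h

lemma subseq_insert_zero_cons (y : A) (g : ℕ → A) :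
    subseq (insert 0 (V.image (· + 1))) (cons y g) = cons y (subseq V g) := by
  have h0 : 0 ∉ V.image (· + 1) := by simp
  funext m
  simp only [subseq, card_insert_of_notMem h0, card_image_of_injective _ (add_left_injective 1)]
  rcases m with _ | m
  · rw [if_pos (Nat.succ_pos _), nth_insert_zero_zero, cons_zero, cons_zero]
  · rw [cons_succ, nth_insert_zero_succ h0]
    by_cases hm : m < #V
    · rw [if_pos (by omega), subseq, if_pos hm, nth_image (strictMonoOn_add_one _) hm, cons_succ]
    · rw [if_neg (by omega), subseq, if_neg hm]

end Sequences

section Reindexing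

variable {M : Type*} [AddCommMonoid M]

lemma sum_powersetCard_range_add_one (k n : ℕ) (F : Finset ℕ → M) :
    ∑ U ∈ (range (n + 1)).powersetCard (k + 1), F U
      = ∑ V ∈ (range n).powersetCard k, F (insert 0 (V.image (· + 1)))
        + ∑ V ∈ (range n).powersetCard (k + 1), F (V.image (· + 1)) := by
  rw [range_add_one', powersetCard_succ_insert (by simp), sum_union, add_comm, sum_image,
    powersetCard_map, powersetCard_map, sum_map, sum_map]
  · simp only [RelEmbedding.coe_toEmbedding, mapEmbedding_apply, map_eq_image]
    rfl
  · intro U hU V hV h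
    have hU0 : 0 ∉ U := fun h0 => by simpa using (mem_powersetCard.1 hU).1 h0
    have hV0 : 0 ∉ V := fun h0 => by simpa using (mem_powersetCard.1 hV).1 h0
    simpa [erase_insert hU0, erase_insert hV0] using congrArg (·.erase 0) h
  · refine disjoint_left.2 fun U hU hU' => ?_
    obtain ⟨V, -, rfl⟩ := mem_image.1 hU'
    simpa using (mem_powersetCard.1 hU).1 (mem_insert_self 0 V)

lemma card_range_sdiff {n m : ℕ} {T : Finset ℕ} (hT : T ∈ (range n).powersetCard m) :
    #(range n \ T) = n - m := by
  rw [card_sdiff_of_subset (mem_powersetCard.1 hT).1, card_range, (mem_powersetCard.1 hT).2]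

variable {α : Type*} [DecidableEq α]

lemma sum_powersetCard_sdiff_comm (X : Finset α) (m n : ℕ) (F : Finset α → Finset α → M) :
    ∑ T ∈ X.powersetCard m, ∑ B ∈ (X \ T).powersetCard n, F T B
      = ∑ B ∈ X.powersetCard n, ∑ T ∈ (X \ B).powersetCard m, F T B := by
  refine sum_comm' fun T B => ?_
  simp only [mem_powersetCard, subset_sdiff]
  constructor
  · rintro ⟨⟨hT, rfl⟩, ⟨hB, hTB⟩, rfl⟩
    exact ⟨⟨⟨hT, hTB.symm⟩, rfl⟩, hB, rfl⟩
  · rintro ⟨⟨⟨hT, hTB⟩, rfl⟩, hB, rfl⟩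
    exact ⟨⟨hT, rfl⟩, ⟨hB, hTB.symm⟩, rfl⟩

lemma sum_powersetCard_powersetCard (X : Finset α) (m n : ℕ) (F : Finset α → Finset α → M) :
    ∑ W ∈ X.powersetCard (m + n), ∑ T ∈ W.powersetCard m, F T (W \ T)
      = ∑ T ∈ X.powersetCard m, ∑ B ∈ (X \ T).powersetCard n, F T B := by
  rw [sum_comm' (t' := X.powersetCard m) (s' := fun T => {W ∈ X.powersetCard (m + n) | T ⊆ W})]
  · refine sum_congr rfl fun T hT => ?_
    refine sum_nbij' (· \ T) (T ∪ ·) (fun W hW => ?_) (fun B hB => ?_) (fun W hW => ?_)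
      (fun B hB => ?_) (fun _ _ => rfl)
    · simp only [mem_filter, mem_powersetCard, subset_sdiff] at hT hW ⊢
      refine ⟨⟨sdiff_subset.trans hW.1.1, disjoint_sdiff_self_left⟩, ?_⟩
      rw [card_sdiff_of_subset hW.2, hW.1.2, hT.2]
      omega
    · simp only [mem_filter, mem_powersetCard, subset_sdiff] at hT hB ⊢
      refine ⟨⟨union_subset hT.1 hB.1.1, ?_⟩, subset_union_left⟩
      rw [card_union_of_disjoint hB.1.2.symm, hT.2, hB.2]
    · exact union_sdiff_of_subset (mem_filter.1 hW).2
    · exact union_sdiff_cancel_left (subset_sdiff.1 (mem_powersetCard.1 hB).1).2.symm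
  · intro W T
    simp only [mem_powersetCard, mem_filter]
    constructor
    · rintro ⟨⟨hW, hWc⟩, hTW, hTc⟩
      exact ⟨⟨⟨hW, hWc⟩, hTW⟩, hTW.trans hW, hTc⟩
    · rintro ⟨⟨⟨hW, hWc⟩, hTW⟩, _, hTc⟩
      exact ⟨⟨hW, hWc⟩, hTW, hTc⟩

end Reindexing

section Derivation

variable {A : Type*} [CommRing A] [Algebra ℝ A] {k : ℕ} {D : (ℕ → A) → A}

lemma map_add_cons (hD : IsAltDeriv (k + 1) D) (x y : A) (g : ℕ → A) :
    D (cons (x + y) g) = D (cons x g) + D (cons y g) := by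
  simpa only [update_cons_zero] using hD.map_add 0 k.succ_pos (cons x g) x y

def consHom (hD : IsAltDeriv (k + 1) D) (g : ℕ → A) : A →+ A :=
  AddMonoidHom.mk' (fun x => D (cons x g)) fun x y => map_add_cons hD x y g

lemma consHom_apply (hD : IsAltDeriv (k + 1) D) (g : ℕ → A) (x : A) :
    consHom hD g x = D (cons x g) := rfl

lemma map_cons_swap (hD : IsAltDeriv (k + 2) D) (x y : A) (g : ℕ → A) :
    D (cons x (cons y g)) = -D (cons y (cons x g)) := by
  have hadd : ∀ u v v',
      D (cons u (cons (v + v') g)) = D (cons u (cons v g)) + D (cons u (cons v' g)) :=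
    fun u v v' => by
      simpa only [update_cons_one] using hD.map_add 1 (by omega) (cons u (cons v g)) v v'
  have hzero : ∀ u, D (cons u (cons u g)) = 0 :=
    fun u => hD.alternating 0 1 (by omega) (by omega) zero_ne_one _ rfl
  have h := hzero (x + y)
  rw [map_add_cons hD, hadd, hadd, hzero, hzero] at h
  linear_combination h

end Derivation

section Composition

variable {A : Type*} [AddCommGroup A]

/-- `altComp` with the sum over shuffles replaced by the sum over their first blocks. -/
def subsetComp (k k' : ℕ) (D D' : (ℕ → A) → A) (f : ℕ → A) : A :=
  ∑ S ∈ (range (k + k' - 1)).powersetCard k',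
    shuffleSign (range (k + k' - 1)) S •
      D (cons (D' (subseq S f)) (subseq (range (k + k' - 1) \ S) f))

lemma sum_powersetCard_subseq_subseq {M : Type*} [AddCommGroup M] (Y : Finset ℕ) (k : ℕ)
    (Φ : (ℕ → A) → (ℕ → A) → M) (f : ℕ → A) :
    ∑ V ∈ (range #Y).powersetCard k,
        shuffleSign (range #Y) V • Φ (subseq V (subseq Y f)) (subseq (range #Y \ V) (subseq Y f))
      = ∑ B ∈ Y.powersetCard k, shuffleSign Y B • Φ (subseq B f) (subseq (Y \ B) f) := by
  rw [← sum_powersetCard_image_nth (S := Y)]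
  refine sum_congr rfl fun V hV => ?_
  have hV := (mem_powersetCard.1 hV).1
  rw [subseq_subseq hV, subseq_subseq sdiff_subset, image_nth_sdiff hV, shuffleSign_image_nth hV]

lemma subsetComp_subseq {k k' : ℕ} {Y : Finset ℕ} (hY : #Y = k + k' - 1) (D D' : (ℕ → A) → A)
    (f : ℕ → A) :
    subsetComp k k' D D' (subseq Y f)
      = ∑ S ∈ Y.powersetCard k',
          shuffleSign Y S • D (cons (D' (subseq S f)) (subseq (Y \ S) f)) := by
  rw [subsetComp, ← hY]
  exact sum_powersetCard_subseq_subseq Y k' (fun u v => D (cons (D' u) v)) f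

lemma subsetComp_cons (a b : ℕ) (D D' : (ℕ → A) → A) (y : A) (g : ℕ → A) :
    subsetComp (a + 1) (b + 1) D D' (cons y g)
      = ∑ V ∈ (range (a + b)).powersetCard b, shuffleSign (range (a + b)) V •
            D (cons (D' (cons y (subseq V g))) (subseq (range (a + b) \ V) g))
        + (-1) ^ (b + 1) • ∑ V ∈ (range (a + b)).powersetCard (b + 1),
            shuffleSign (range (a + b)) V •
              D (cons (D' (subseq V g)) (cons y (subseq (range (a + b) \ V) g))) := by
  rw [subsetComp, show a + 1 + (b + 1) - 1 = a + b + 1 by omega, sum_powersetCard_range_add_one,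
    smul_sum]
  congr 1
  · refine sum_congr rfl fun V _ => ?_
    rw [shuffleSign_insert_zero, subseq_insert_zero_cons, range_add_one_sdiff_insert,
      subseq_image_add_one_cons]
  · refine sum_congr rfl fun V hV => ?_
    rw [shuffleSign_image_add_one, (mem_powersetCard.1 hV).2, subseq_image_add_one_cons,
      range_add_one_sdiff_image, subseq_insert_zero_cons, smul_smul]

lemma subsetComp_cons_subseq {a b : ℕ} {Y : Finset ℕ} (hY : #Y = a + b) (D D' : (ℕ → A) → A)
    (y : A) (f : ℕ → A) :
    subsetComp (a + 1) (b + 1) D D' (cons y (subseq Y f))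
      = ∑ B ∈ Y.powersetCard b,
            shuffleSign Y B • D (cons (D' (cons y (subseq B f))) (subseq (Y \ B) f))
        + (-1) ^ (b + 1) • ∑ B ∈ Y.powersetCard (b + 1),
            shuffleSign Y B • D (cons (D' (subseq B f)) (cons y (subseq (Y \ B) f))) := by
  rw [subsetComp_cons, ← hY,
    sum_powersetCard_subseq_subseq Y b fun u v => D (cons (D' (cons y u)) v),
    sum_powersetCard_subseq_subseq Y (b + 1) fun u v => D (cons (D' u) (cons y v))]

end Composition

section Associator

variable {A : Type*}

def nestedInsert [AddCommGroup A] (X : Finset ℕ) (b c : ℕ) (D D' D'' : (ℕ → A) → A)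
    (f : ℕ → A) : A :=
  ∑ T ∈ X.powersetCard (c + 1), ∑ B ∈ (X \ T).powersetCard b,
    (shuffleSign X T * shuffleSign (X \ T) B) •
      D (cons (D' (cons (D'' (subseq T f)) (subseq B f))) (subseq ((X \ T) \ B) f))

def doubleInsert [AddCommGroup A] (X : Finset ℕ) (b c : ℕ) (D D' D'' : (ℕ → A) → A)
    (f : ℕ → A) : A :=
  ∑ T ∈ X.powersetCard (c + 1), ∑ B ∈ (X \ T).powersetCard (b + 1),
    ((-1) ^ (b + 1) * (shuffleSign X T * shuffleSign (X \ T) B)) •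
      D (cons (D' (subseq B f)) (cons (D'' (subseq T f)) (subseq ((X \ T) \ B) f)))

lemma subsetComp_subsetComp_left [AddCommGroup A] (a b c : ℕ) (D D' D'' : (ℕ → A) → A)
    (f : ℕ → A) :
    subsetComp (a + b + 1) (c + 1) (subsetComp (a + 1) (b + 1) D D') D'' f
      = nestedInsert (range (a + b + c + 1)) b c D D' D'' f
        + doubleInsert (range (a + b + c + 1)) b c D D' D'' f := by
  rw [subsetComp, show a + b + 1 + (c + 1) - 1 = a + b + c + 1 by omega, nestedInsert,
    doubleInsert, ← sum_add_distrib]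
  refine sum_congr rfl fun T hT => ?_
  rw [subsetComp_cons_subseq (by rw [card_range_sdiff hT]; omega), smul_add, smul_sum, smul_sum,
    smul_sum]
  congr 1 <;> refine sum_congr rfl fun B _ => ?_
  · rw [smul_smul]
  · rw [smul_smul, smul_smul]
    ring_nf

lemma subsetComp_subsetComp_right [CommRing A] [Algebra ℝ A] {a b c : ℕ} {D : (ℕ → A) → A}
    (hD : IsAltDeriv (a + 1) D) (D' D'' : (ℕ → A) → A) (f : ℕ → A) :
    subsetComp (a + 1) (b + c + 1) D (subsetComp (b + 1) (c + 1) D' D'') f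
      = nestedInsert (range (a + b + c + 1)) b c D D' D'' f := by
  set X := range (a + b + c + 1)
  have hexpand : ∀ W ∈ X.powersetCard (b + c + 1),
      shuffleSign X W •
          D (cons (subsetComp (b + 1) (c + 1) D' D'' (subseq W f)) (subseq (X \ W) f))
        = ∑ T ∈ W.powersetCard (c + 1),
            (shuffleSign X (T ∪ W \ T) * shuffleSign (T ∪ W \ T) T) •
              D (cons (D' (cons (D'' (subseq T f)) (subseq (W \ T) f)))
                (subseq (X \ (T ∪ W \ T)) f)) := by
    intro W hW
    rw [subsetComp_subseq (by rw [(mem_powersetCard.1 hW).2]; omega), ← consHom_apply hD,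
      map_sum, smul_sum]
    refine sum_congr rfl fun T hT => ?_
    rw [map_zsmul, consHom_apply, smul_smul, union_sdiff_of_subset (mem_powersetCard.1 hT).1]
  rw [subsetComp, show a + 1 + (b + c + 1) - 1 = a + b + c + 1 by omega, sum_congr rfl hexpand,
    show b + c + 1 = c + 1 + b by omega]
  refine (sum_powersetCard_powersetCard X (c + 1) b fun T B =>
    (shuffleSign X (T ∪ B) * shuffleSign (T ∪ B) T) •
      D (cons (D' (cons (D'' (subseq T f)) (subseq B f))) (subseq (X \ (T ∪ B)) f))).trans ?_
  refine sum_congr rfl fun T _ => sum_congr rfl fun B hB => ?_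
  rw [shuffleSign_mul_shuffleSign_sdiff (mem_powersetCard.1 hB).1, sdiff_union_distrib,
    ← Finset.sdiff_sdiff_left']

lemma doubleInsert_comm [CommRing A] [Algebra ℝ A] {a b c : ℕ} {X : Finset ℕ}
    (hX : #X = a + b + c + 1) {D : (ℕ → A) → A} (hD : IsAltDeriv (a + 1) D)
    (D' D'' : (ℕ → A) → A) (f : ℕ → A) :
    doubleInsert X b c D D' D'' f = (-1) ^ (b * c) • doubleInsert X c b D D'' D' f := by
  rw [doubleInsert, doubleInsert, sum_powersetCard_sdiff_comm, smul_sum]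
  refine sum_congr rfl fun B hB => ?_
  rw [smul_sum]
  refine sum_congr rfl fun T hT => ?_
  obtain ⟨hBX, hBc⟩ := mem_powersetCard.1 hB
  obtain ⟨hTXB, hTc⟩ := mem_powersetCard.1 hT
  obtain ⟨hTX, hTB⟩ := subset_sdiff.1 hTXB
  obtain ⟨a, rfl⟩ : ∃ a', a = a' + 1 := by
    have := card_le_card (union_subset hTX hBX)
    rw [card_union_of_disjoint hTB, hTc, hBc, hX] at this
    exact ⟨a - 1, by omega⟩
  rw [map_cons_swap hD, shuffleSign_mul_shuffleSign_sdiff_comm hTX hBX hTB, hTc, hBc,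
    show (X \ T) \ B = (X \ B) \ T by ext; simp; tauto, smul_neg, smul_smul, ← neg_smul]
  congr 1
  have hsign : (-1 : ℤ) ^ (1 + (b + 1) + (c + 1) * (b + 1)) = (-1) ^ (b * c + (c + 1)) :=
    neg_one_pow_congr (by simp only [Nat.even_add, Nat.even_mul, Nat.even_add_one]; tauto)
  generalize shuffleSign _ B * shuffleSign _ T = E
  linear_combination E * hsign

end Associator

section PreLie

variable {X : Type*} [AddCommGroup X] (ins : ℕ → ℕ → X → X → X)

def gradedBracket (i j : ℕ) (u v : X) : X := ins i j u v - (-1 : ℤ) ^ (i * j) • ins j i v u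

def gradedAssociator (i j l : ℕ) (u v w : X) : X :=
  ins (i + j) l (ins i j u v) w - ins i (j + l) u (ins j l v w)

variable {ins}

theorem gradedBracket_jacobi (P : ℕ → X → Prop)
    (sub_left : ∀ i j u v w (n : ℤ), ins i j (u - n • v) w = ins i j u w - n • ins i j v w)
    (sub_right : ∀ i j u v w (n : ℤ), P i u →
      ins i j u (v - n • w) = ins i j u v - n • ins i j u w)
    (associator_comm : ∀ i j l u v w, P i u →
      gradedAssociator ins i j l u v w = (-1 : ℤ) ^ (j * l) • gradedAssociator ins i l j u w v)
    {p q r : ℕ} {x y z : X} (hx : P p x) (hy : P q y) (hz : P r z) :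
    (-1 : ℤ) ^ (p * r) • gradedBracket ins (p + q) r (gradedBracket ins p q x y) z
      + (-1 : ℤ) ^ (q * p) • gradedBracket ins (q + r) p (gradedBracket ins q r y z) x
      + (-1 : ℤ) ^ (r * q) • gradedBracket ins (r + p) q (gradedBracket ins r p z x) y = 0 := by
  have hx' := associator_comm p q r x y z hx
  have hy' := associator_comm q r p y z x hy
  have hz' := associator_comm r p q z x y hz
  simp only [gradedAssociator] at hx' hy' hz'
  rw [Nat.add_comm p r, Nat.add_comm r q] at hx'
  rw [Nat.add_comm q p, Nat.add_comm p r] at hy'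
  rw [Nat.add_comm r q, Nat.add_comm q p] at hz'
  simp only [gradedBracket, sub_left, sub_right _ _ _ _ _ _ hx, sub_right _ _ _ _ _ _ hy,
    sub_right _ _ _ _ _ _ hz]
  -- the Jacobi sum is a signed sum of the three associator identities, up to signs squaring to 1
  linear_combination (norm := skip)
    (-1 : ℤ) ^ (p * r) • hx' + (-1 : ℤ) ^ (p * q) • hy' + (-1 : ℤ) ^ (q * r) • hz'
  simp only [add_mul, pow_add, Nat.mul_comm q p, Nat.mul_comm r p, Nat.mul_comm r q]
  rcases neg_one_pow_eq_or ℤ (p * q) with h1 | h1 <;>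
    rcases neg_one_pow_eq_or ℤ (p * r) with h2 | h2 <;>
      rcases neg_one_pow_eq_or ℤ (q * r) with h3 | h3 <;>
        simp only [h1, h2, h3] <;> module

end PreLie

section Shuffle

variable {N c : ℕ} {σ : Equiv.Perm (Fin N)}

def permNat (σ : Equiv.Perm (Fin N)) (m : ℕ) : ℕ := if h : m < N then σ ⟨m, h⟩ else m

lemma permNat_of_lt (σ : Equiv.Perm (Fin N)) (i : Fin N) : permNat σ i = σ i := by
  simp [permNat]

lemma injOn_permNat (σ : Equiv.Perm (Fin N)) : Set.InjOn (permNat σ) ↑(range N) := by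
  intro m hm m' hm' h
  simp only [coe_range, Set.mem_Iio] at hm hm'
  simp only [permNat, dif_pos hm, dif_pos hm'] at h
  simpa using σ.injective (Fin.ext h)

lemma image_permNat_range (σ : Equiv.Perm (Fin N)) : (range N).image (permNat σ) = range N := by
  refine eq_of_subset_of_card_le (fun x hx => ?_) (card_image_of_injOn (injOn_permNat σ)).ge
  obtain ⟨m, hm, rfl⟩ := mem_image.1 hx
  simp [permNat, mem_range.1 hm]

lemma strictMonoOn_permNat_left (hσ : IsShuffle c σ) (hcN : c ≤ N) :
    StrictMonoOn (permNat σ) ↑(range c) := by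
  intro m hm m' hm' h
  simp only [coe_range, Set.mem_Iio] at hm hm'
  simp only [permNat, dif_pos (hm.trans_le hcN), dif_pos (hm'.trans_le hcN)]
  exact hσ.1 ⟨m, _⟩ ⟨m', _⟩ h hm'

lemma strictMonoOn_permNat_right (hσ : IsShuffle c σ) :
    StrictMonoOn (fun j => permNat σ (c + j)) ↑(range (N - c)) := by
  intro j hj j' hj' h
  simp only [coe_range, Set.mem_Iio] at hj hj'
  simp only [permNat, dif_pos (show c + j < N by omega), dif_pos (show c + j' < N by omega)]
  exact hσ.2 ⟨c + j, _⟩ ⟨c + j', _⟩ (show c + j < c + j' by omega) (Nat.le_add_right c j)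

def firstBlock (c : ℕ) (σ : Equiv.Perm (Fin N)) : Finset ℕ :=
  (univ.filter fun i : Fin N => (i : ℕ) < c).image fun i => (σ i : ℕ)

lemma range_sdiff_firstBlock (c : ℕ) (σ : Equiv.Perm (Fin N)) :
    range N \ firstBlock c σ
      = (univ.filter fun j : Fin N => c ≤ (j : ℕ)).image fun j => (σ j : ℕ) := by
  ext x
  simp only [firstBlock, mem_sdiff, mem_range, mem_image, mem_filter, mem_univ, true_and,
    not_exists, not_and]
  constructor
  · rintro ⟨hx, hnot⟩
    refine ⟨σ.symm ⟨x, hx⟩, ?_, by simp⟩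
    by_contra h
    exact hnot (σ.symm ⟨x, hx⟩) (by omega) (by simp)
  · rintro ⟨j, hj, rfl⟩
    refine ⟨(σ j).isLt, fun i hi h => ?_⟩
    have := σ.injective (Fin.ext h)
    omega

lemma firstBlock_eq_image_range (hcN : c ≤ N) : firstBlock c σ = (range c).image (permNat σ) := by
  ext x
  simp only [firstBlock, mem_image, mem_filter, mem_univ, true_and, mem_range]
  constructor
  · rintro ⟨i, hi, rfl⟩
    exact ⟨i, hi, permNat_of_lt σ i⟩
  · rintro ⟨m, hm, rfl⟩
    exact ⟨⟨m, hm.trans_le hcN⟩, hm, (permNat_of_lt σ ⟨m, _⟩).symm⟩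

lemma sign_eq_shuffleSign (hσ : IsShuffle c σ) :
    (Equiv.Perm.sign σ : ℤ) = shuffleSign (range N) (firstBlock c σ) := by
  have hinv : ∀ i : Fin N, {j ∈ Ioi i | ¬σ i < σ j}
      = if (i : ℕ) < c then univ.filter (fun j : Fin N => c ≤ (j : ℕ) ∧ σ j < σ i) else ∅ := by
    intro i
    ext j
    simp only [mem_filter, mem_Ioi]
    split_ifs with hi
    · simp only [mem_filter, mem_univ, true_and]
      constructor
      · rintro ⟨hij, hσij⟩
        have hcj : c ≤ (j : ℕ) := not_lt.1 fun hjc => hσij (hσ.1 i j hij hjc)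
        exact ⟨hcj, lt_of_le_of_ne (not_lt.1 hσij) fun h => hij.ne (σ.injective h).symm⟩
      · rintro ⟨hcj, hσji⟩
        exact ⟨Fin.lt_def.2 (hi.trans_le hcj), hσji.asymm⟩
    · simp only [notMem_empty, iff_false, not_and, not_not]
      exact fun hij => hσ.2 i j hij (not_lt.1 hi)
  rw [Equiv.Perm.sign_eq_prod_prod_Ioi σ]
  simp only [Units.coe_prod, apply_ite Units.val, Units.val_one, Units.val_neg]
  simp only [prod_ite, prod_const_one, prod_const, one_mul, prod_pow_eq_pow_sum, shuffleSign,
    invCount, range_sdiff_firstBlock]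
  congr 1
  simp_rw [hinv, apply_ite card, card_empty, sum_ite, sum_const_zero, add_zero]
  rw [firstBlock, sum_image fun i _ j _ h => σ.injective (Fin.ext h)]
  refine sum_congr rfl fun i _ => ?_
  rw [filter_image, card_image_of_injective _ fun j j' h => σ.injective (Fin.ext h), filter_filter]
  exact congrArg card (filter_congr fun j _ => Iff.rfl)

lemma firstBlock_subset : firstBlock c σ ⊆ range N := by
  intro x hx
  obtain ⟨i, -, rfl⟩ := mem_image.1 hx
  exact mem_range.2 (σ i).isLt

lemma card_firstBlock (hcN : c ≤ N) : #(firstBlock c σ) = c := by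
  rw [firstBlock_eq_image_range hcN, card_image_of_injOn ((injOn_permNat σ).mono (by simpa)),
    card_range]

lemma nth_firstBlock (hσ : IsShuffle c σ) (hcN : c ≤ N) {m : ℕ} (hm : m < c) :
    nth (firstBlock c σ) m = permNat σ m := by
  rw [firstBlock_eq_image_range hcN, nth_image (strictMonoOn_permNat_left hσ hcN) (by simpa),
    nth_range hm]

lemma nth_range_sdiff_firstBlock (hσ : IsShuffle c σ) (hcN : c ≤ N) {j : ℕ} (hj : j < N - c) :
    nth (range N \ firstBlock c σ) j = permNat σ (c + j) := by
  have hcompl : range N \ firstBlock c σ = (range (N - c)).image fun j => permNat σ (c + j) := by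
    conv_lhs => rw [← image_permNat_range σ]
    rw [firstBlock_eq_image_range hcN, ← image_sdiff_of_injOn (injOn_permNat σ) (by simpa),
      show range N \ range c = (range (N - c)).image (c + ·) by
        ext x; simp only [mem_sdiff, mem_range, mem_image]; constructor
        · exact fun h => ⟨x - c, by omega, by omega⟩
        · rintro ⟨j, hj, rfl⟩; omega,
      image_image]
    rfl
  rw [hcompl, nth_image (strictMonoOn_permNat_right hσ) (by simpa), nth_range hj]

lemma eq_of_firstBlock_eq {τ : Equiv.Perm (Fin N)} (hσ : IsShuffle c σ) (hτ : IsShuffle c τ)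
    (hcN : c ≤ N) (h : firstBlock c σ = firstBlock c τ) : σ = τ := by
  ext i
  rw [← permNat_of_lt σ i, ← permNat_of_lt τ i]
  by_cases hi : (i : ℕ) < c
  · rw [← nth_firstBlock hσ hcN hi, ← nth_firstBlock hτ hcN hi, h]
  · have hic : (i : ℕ) = c + (i - c) := by omega
    rw [hic, ← nth_range_sdiff_firstBlock hσ hcN (by omega),
      ← nth_range_sdiff_firstBlock hτ hcN (by omega), h]

lemma exists_isShuffle_firstBlock_eq {S : Finset ℕ} (hS : S ⊆ range N) (hSc : #S = c) :
    ∃ σ : Equiv.Perm (Fin N), IsShuffle c σ ∧ firstBlock c σ = S := by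
  have hcN : c ≤ N := hSc ▸ (card_le_card hS).trans (card_range N).le
  have hScc : #(range N \ S) = N - c := by rw [card_sdiff_of_subset hS, card_range, hSc]
  let φ : ℕ → ℕ := fun i => if i < c then nth S i else nth (range N \ S) (i - c)
  have hφS : ∀ i < c, φ i ∈ S := fun i hi => by simp only [φ, if_pos hi]; exact nth_mem (by omega)
  have hφSc : ∀ i, c ≤ i → i < N → φ i ∈ range N \ S := fun i hci hi => by
    simp only [φ, if_neg (not_lt.2 hci)]; exact nth_mem (by omega)
  have hφN : ∀ i : Fin N, φ i < N := fun i => by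
    by_cases hi : (i : ℕ) < c
    · exact mem_range.1 (hS (hφS i hi))
    · exact mem_range.1 (mem_sdiff.1 (hφSc i (not_lt.1 hi) i.isLt)).1
  have hinj : Function.Injective fun i : Fin N => (⟨φ i, hφN i⟩ : Fin N) := by
    intro i j hij
    simp only [Fin.mk.injEq] at hij
    by_cases hi : (i : ℕ) < c <;> by_cases hj : (j : ℕ) < c
    · simp only [φ, if_pos hi, if_pos hj] at hij
      exact Fin.ext (nth_strictMonoOn.injOn (by simp; omega) (by simp; omega) hij)
    · exact absurd (hij ▸ hφS i hi) (mem_sdiff.1 (hφSc j (not_lt.1 hj) j.isLt)).2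
    · exact absurd (hij ▸ hφS j hj) (mem_sdiff.1 (hφSc i (not_lt.1 hi) i.isLt)).2
    · simp only [φ, if_neg hi, if_neg hj] at hij
      have := nth_strictMonoOn.injOn (by simp; omega) (by simp; omega) hij
      exact Fin.ext (by omega)
  refine ⟨Equiv.ofBijective _ (Finite.injective_iff_bijective.1 hinj), ⟨?_, ?_⟩, ?_⟩
  · intro i j hij hjc
    simp only [Equiv.ofBijective_apply, Fin.mk_lt_mk, φ, if_pos hjc,
      if_pos ((Fin.lt_def.1 hij).trans hjc)]
    exact nth_lt_nth hij (by omega)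
  · intro i j hij hci
    have hcj : c ≤ (j : ℕ) := hci.trans (Fin.lt_def.1 hij).le
    simp only [Equiv.ofBijective_apply, Fin.mk_lt_mk, φ, if_neg (not_lt.2 hci),
      if_neg (not_lt.2 hcj)]
    exact nth_lt_nth (by have := Fin.lt_def.1 hij; omega) (by omega)
  · rw [firstBlock_eq_image_range hcN]
    conv_rhs => rw [← image_nth_range (S := S), hSc]
    refine image_congr fun m hm => ?_
    have hm : m < c := mem_range.1 hm
    simp [permNat, hm.trans_le hcN, φ, hm]

theorem altComp_eq_subsetComp {A : Type*} [CommRing A] [Algebra ℝ A] {k k' : ℕ} (hk : 1 ≤ k)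
    (hk' : 1 ≤ k') (D D' : (ℕ → A) → A) :
    altComp k k' D D' = subsetComp k k' D D' := by
  funext f
  have hk'N : k' ≤ k + k' - 1 := by omega
  rw [altComp, subsetComp, ← sum_filter]
  refine sum_bij (fun σ _ => firstBlock k' σ) (fun σ _ => ?_) (fun σ hσ τ hτ h => ?_)
    (fun S hS => ?_) (fun σ hσ => ?_)
  · exact mem_powersetCard.2 ⟨firstBlock_subset, card_firstBlock hk'N⟩
  · exact eq_of_firstBlock_eq (mem_filter.1 hσ).2 (mem_filter.1 hτ).2 hk'N h
  · obtain ⟨σ, hσ, rfl⟩ := exists_isShuffle_firstBlock_eq (mem_powersetCard.1 hS).1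
      (mem_powersetCard.1 hS).2
    exact ⟨σ, mem_filter.2 ⟨mem_univ σ, hσ⟩, rfl⟩
  have hσ := (mem_filter.1 hσ).2
  rw [sign_eq_shuffleSign hσ]
  congr 2
  funext t
  rcases t with _ | t
  · refine congrArg D' (funext fun m => ?_)
    simp only [subseq, card_firstBlock hk'N]
    by_cases hm : m < k'
    · rw [dif_pos ⟨hm, by omega⟩, if_pos hm, nth_firstBlock hσ hk'N hm, permNat_of_lt σ ⟨m, _⟩]
    · rw [dif_neg (by omega), if_neg hm]
  · simp only [cons_succ, subseq, card_sdiff_of_subset firstBlock_subset, card_range,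
      card_firstBlock hk'N, Nat.succ_ne_zero, if_false]
    by_cases ht : t < k + k' - 1 - k'
    · rw [dif_pos ⟨by omega, by omega⟩, if_pos ht, nth_range_sdiff_firstBlock hσ hk'N ht]
      rw [permNat, dif_pos (by omega)]
      exact congrArg (fun i => f (σ i)) (Fin.ext (by simp only; omega))
    · rw [dif_neg (by omega), if_neg ht]

end Shuffle

section Bracket

variable {A : Type*}

def shiftedComp [AddCommGroup A] (i j : ℕ) (D D' : (ℕ → A) → A) : (ℕ → A) → A :=
  subsetComp (i + 1) (j + 1) D D'

lemma shiftedComp_sub_left [AddCommGroup A] (i j : ℕ) (u v w : (ℕ → A) → A) (n : ℤ) :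
    shiftedComp i j (u - n • v) w = shiftedComp i j u w - n • shiftedComp i j v w := by
  funext f
  simp only [shiftedComp, subsetComp, Pi.sub_apply, Pi.smul_apply, smul_sub, sum_sub_distrib,
    smul_sum, smul_comm n]

variable [CommRing A] [Algebra ℝ A]

lemma shiftedComp_sub_right {i : ℕ} {u : (ℕ → A) → A} (hu : IsAltDeriv (i + 1) u) (j : ℕ)
    (v w : (ℕ → A) → A) (n : ℤ) :
    shiftedComp i j u (v - n • w) = shiftedComp i j u v - n • shiftedComp i j u w := by
  funext f
  simp only [shiftedComp, subsetComp, Pi.sub_apply, Pi.smul_apply, ← consHom_apply hu, map_sub,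
    map_zsmul, smul_sub, sum_sub_distrib, smul_sum, smul_comm n]

lemma gradedAssociator_shiftedComp {i : ℕ} {u : (ℕ → A) → A} (hu : IsAltDeriv (i + 1) u)
    (j l : ℕ) (v w : (ℕ → A) → A) :
    gradedAssociator shiftedComp i j l u v w = doubleInsert (range (i + j + l + 1)) j l u v w := by
  funext f
  rw [gradedAssociator, Pi.sub_apply, shiftedComp, shiftedComp, shiftedComp, shiftedComp,
    subsetComp_subsetComp_left, subsetComp_subsetComp_right hu, add_sub_cancel_left]

lemma gradedAssociator_shiftedComp_comm {i : ℕ} {u : (ℕ → A) → A} (hu : IsAltDeriv (i + 1) u)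
    (j l : ℕ) (v w : (ℕ → A) → A) :
    gradedAssociator shiftedComp i j l u v w
      = (-1 : ℤ) ^ (j * l) • gradedAssociator shiftedComp i l j u w v := by
  rw [gradedAssociator_shiftedComp hu, gradedAssociator_shiftedComp hu,
    show i + l + j + 1 = i + j + l + 1 by omega]
  funext f
  exact doubleInsert_comm (card_range _) hu v w f

lemma altBracket_eq_gradedBracket (i j : ℕ) (u v : (ℕ → A) → A) :
    altBracket (i + 1) (j + 1) u v = gradedBracket shiftedComp i j u v := by
  funext f
  simp only [altBracket, gradedBracket, shiftedComp, Nat.add_sub_cancel, Pi.sub_apply,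
    Pi.smul_apply, altComp_eq_subsetComp (Nat.le_add_left 1 _) (Nat.le_add_left 1 _)]

end Bracket

end AltDeriv

/-- **Generalized Jacobi identity** for the graded bracket of alternating
multiderivations: for `D` `k`-alternating, `D'` `k'`-alternating and `D''`
`k''`-alternating,
`(−1)^{(k−1)(k''−1)} [[D,D'],D''] + (−1)^{(k'−1)(k−1)} [[D',D''],D]
 + (−1)^{(k''−1)(k'−1)} [[D'',D],D'] = 0`. -/
theorem altBracket_generalized_jacobi {A : Type*} [CommRing A] [Algebra ℝ A]
    (k k' k'' : ℕ) (hk : 1 ≤ k) (hk' : 1 ≤ k') (hk'' : 1 ≤ k'')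
    (D D' D'' : (ℕ → A) → A)
    (hD : IsAltDeriv k D) (hD' : IsAltDeriv k' D') (hD'' : IsAltDeriv k'' D'') :
    ∀ f : ℕ → A,
      ((-1 : ℤ) ^ ((k - 1) * (k'' - 1))) •
          altBracket (k + k' - 1) k'' (altBracket k k' D D') D'' f
        + ((-1 : ℤ) ^ ((k' - 1) * (k - 1))) •
            altBracket (k' + k'' - 1) k (altBracket k' k'' D' D'') D f
        + ((-1 : ℤ) ^ ((k'' - 1) * (k' - 1))) •
            altBracket (k'' + k - 1) k' (altBracket k'' k D'' D) D' f = 0 := by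
  obtain ⟨a, rfl⟩ : ∃ a, k = a + 1 := ⟨k - 1, by omega⟩
  obtain ⟨b, rfl⟩ : ∃ b, k' = b + 1 := ⟨k' - 1, by omega⟩
  obtain ⟨c, rfl⟩ : ∃ c, k'' = c + 1 := ⟨k'' - 1, by omega⟩
  intro f
  have hjacobi := AltDeriv.gradedBracket_jacobi (fun i u => IsAltDeriv (i + 1) u)
    AltDeriv.shiftedComp_sub_left (fun i j u v w n hu => AltDeriv.shiftedComp_sub_right hu j v w n)
    (fun i j l u v w hu => AltDeriv.gradedAssociator_shiftedComp_comm hu j l v w) hD hD' hD''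
  rw [show a + 1 + (b + 1) - 1 = a + b + 1 by omega, show b + 1 + (c + 1) - 1 = b + c + 1 by omega,
    show c + 1 + (a + 1) - 1 = c + a + 1 by omega]
  simp only [Nat.add_sub_cancel, AltDeriv.altBracket_eq_gradedBracket]
  simpa only [Pi.add_apply, Pi.smul_apply, Pi.zero_apply] using congrFun hjacobi f
end
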